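/- arXiv:1705.10145 — 9 statements merged into one kernel-verified Lean document; each statement's English description precedes it below -/
import Mathlib

section
/- For any linear relation (V,C), the restricted relation on C^♭ satisfies (C|_{C^♭})^♭ = C^♭, and the restricted relation on C^♯ satisfies (C|_{C^♯})^♯ = C^♯. -/
/-! Every term of a chain through `C` lies in `C^♯` (shift the chain), and every term of a chain
vanishing to the right (left) lies in `C₊` (`C₋`), hence in `C^♭`. So the chains witnessing
membership in `C^♯` or `C^♭` automatically stay inside that set, and restricting `C` to any
superset of it changes nothing. -/

variable {K : Type*} [Field K]

section Defs
variable {V : Type*} [AddCommGroup V] [Module K V]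

/-- A ℤ-indexed chain through the relation `C`. -/
def IsCChain (C : Submodule K (V × V)) (f : ℤ → V) : Prop :=
  ∀ n : ℤ, (f n, f (n + 1)) ∈ C

/-- `C^♯`: elements lying on a bi-infinite chain. -/
def csharp (C : Submodule K (V × V)) : Set V :=
  {v | ∃ f : ℤ → V, IsCChain C f ∧ f 0 = v}

/-- `C₊`: elements lying on a bi-infinite chain which is eventually zero to the right. -/
def cplus (C : Submodule K (V × V)) : Set V :=
  {v | ∃ f : ℤ → V, IsCChain C f ∧ f 0 = v ∧ ∃ N : ℤ, ∀ n ≥ N, f n = 0}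

/-- `C₋`: elements lying on a bi-infinite chain which is eventually zero to the left. -/
def cminus (C : Submodule K (V × V)) : Set V :=
  {v | ∃ f : ℤ → V, IsCChain C f ∧ f 0 = v ∧ ∃ N : ℤ, ∀ n ≤ N, f n = 0}

/-- `C^♭ = C₊ + C₋`. -/
def cflat (C : Submodule K (V × V)) : Set V :=
  {v | ∃ a ∈ cplus C, ∃ b ∈ cminus C, v = a + b}

end Defs

section Relative
variable {V : Type*} [AddCommGroup V] [Module K V]

/-- `(C|_U)^♯`: chains through `C` staying inside `U`. -/
def csharpIn (C : Submodule K (V × V)) (U : Set V) : Set V :=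
  {v | ∃ f : ℤ → V, IsCChain C f ∧ (∀ n, f n ∈ U) ∧ f 0 = v}

/-- `(C|_U)₊`. -/
def cplusIn (C : Submodule K (V × V)) (U : Set V) : Set V :=
  {v | ∃ f : ℤ → V, IsCChain C f ∧ (∀ n, f n ∈ U) ∧ f 0 = v ∧ ∃ N : ℤ, ∀ n ≥ N, f n = 0}

/-- `(C|_U)₋`. -/
def cminusIn (C : Submodule K (V × V)) (U : Set V) : Set V :=
  {v | ∃ f : ℤ → V, IsCChain C f ∧ (∀ n, f n ∈ U) ∧ f 0 = v ∧ ∃ N : ℤ, ∀ n ≤ N, f n = 0}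

/-- `(C|_U)^♭ = (C|_U)₊ + (C|_U)₋`. -/
def cflatIn (C : Submodule K (V × V)) (U : Set V) : Set V :=
  {v | ∃ a ∈ cplusIn C U, ∃ b ∈ cminusIn C U, v = a + b}

end Relative

namespace IsCChain

variable {V : Type*} [AddCommGroup V] [Module K V] {C : Submodule K (V × V)} {f : ℤ → V}

lemma comp_add_right (hf : IsCChain C f) (k : ℤ) : IsCChain C (fun n => f (n + k)) := by
  intro n
  simpa only [add_right_comm n 1 k] using hf (n + k)

lemma const_zero (C : Submodule K (V × V)) : IsCChain C (fun _ : ℤ => (0 : V)) :=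
  fun _ => C.zero_mem

lemma apply_mem_csharp (hf : IsCChain C f) (k : ℤ) : f k ∈ csharp C :=
  ⟨fun n => f (n + k), hf.comp_add_right k, by simp⟩

lemma apply_mem_cplus (hf : IsCChain C f) {N : ℤ} (hN : ∀ n ≥ N, f n = 0) (k : ℤ) :
    f k ∈ cplus C :=
  ⟨fun n => f (n + k), hf.comp_add_right k, by simp, N - k, fun n hn => hN (n + k) (by omega)⟩

lemma apply_mem_cminus (hf : IsCChain C f) {N : ℤ} (hN : ∀ n ≤ N, f n = 0) (k : ℤ) :
    f k ∈ cminus C :=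
  ⟨fun n => f (n + k), hf.comp_add_right k, by simp, N - k, fun n hn => hN (n + k) (by omega)⟩

end IsCChain

section Restrict

variable {V : Type*} [AddCommGroup V] [Module K V] (C : Submodule K (V × V))

lemma zero_mem_cplus : (0 : V) ∈ cplus C :=
  ⟨_, IsCChain.const_zero C, rfl, 0, fun _ _ => rfl⟩

lemma zero_mem_cminus : (0 : V) ∈ cminus C :=
  ⟨_, IsCChain.const_zero C, rfl, 0, fun _ _ => rfl⟩

lemma cplus_subset_cflat : cplus C ⊆ cflat C :=
  fun a ha => ⟨a, ha, 0, zero_mem_cminus C, (add_zero a).symm⟩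

lemma cminus_subset_cflat : cminus C ⊆ cflat C :=
  fun b hb => ⟨0, zero_mem_cplus C, b, hb, (zero_add b).symm⟩

lemma cflatIn_subset_cflat (U : Set V) : cflatIn C U ⊆ cflat C := by
  rintro _ ⟨a, ⟨f, hf, -, hf0, hfN⟩, b, ⟨g, hg, -, hg0, hgN⟩, rfl⟩
  exact ⟨a, ⟨f, hf, hf0, hfN⟩, b, ⟨g, hg, hg0, hgN⟩, rfl⟩

lemma cflat_subset_cflatIn {U : Set V} (hU : cflat C ⊆ U) : cflat C ⊆ cflatIn C U := by
  rintro _ ⟨a, ⟨f, hf, hf0, N, hfN⟩, b, ⟨g, hg, hg0, M, hgM⟩, rfl⟩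
  exact ⟨a, ⟨f, hf, fun n => hU (cplus_subset_cflat C (hf.apply_mem_cplus hfN n)), hf0, N, hfN⟩,
    b, ⟨g, hg, fun n => hU (cminus_subset_cflat C (hg.apply_mem_cminus hgM n)), hg0, M, hgM⟩, rfl⟩

lemma cflatIn_eq_cflat {U : Set V} (hU : cflat C ⊆ U) : cflatIn C U = cflat C :=
  (cflatIn_subset_cflat C U).antisymm (cflat_subset_cflatIn C hU)

lemma csharpIn_eq_csharp {U : Set V} (hU : csharp C ⊆ U) : csharpIn C U = csharp C := by
  ext v
  constructor
  · rintro ⟨f, hf, -, hf0⟩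
    exact ⟨f, hf, hf0⟩
  · rintro ⟨f, hf, hf0⟩
    exact ⟨f, hf, fun n => hU (hf.apply_mem_csharp n), hf0⟩

end Restrict

/-- `(C|_{C^♭})^♭ = C^♭` and `(C|_{C^♯})^♯ = C^♯`. -/
theorem restrict_flat_sharp {V : Type*} [AddCommGroup V] [Module K V]
    (C : Submodule K (V × V)) :
    cflatIn C (cflat C) = cflat C ∧ csharpIn C (csharp C) = csharp C :=
  ⟨cflatIn_eq_cflat C subset_rfl, csharpIn_eq_csharp C subset_rfl⟩
end

section
/- For any linear relation (V,C), C^♯ = C'' ∩ (C^{-1})'', C_+ = C'' ∩ (C^{-1})', and C_- = (C^{-1})'' ∩ C', where C' = ⋃_{n≥0} C^n 0 and C'' = {v_0 : ∃ v_n for n > 0 with v_n ∈ C v_{n+1} for all n ≥ 0}. -/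
/-!
A bi-infinite `C`-chain through `v` is the same thing as two one-sided chains starting at `v`,
one for `C` running to the right and one for `C⁻¹` running to the left, glued at `0`. The left
halves through `v` witness `v ∈ C''` and the right halves witness `v ∈ (C⁻¹)''`; a right half
that is eventually zero is exactly a witness of `v ∈ (C⁻¹)'`. Reversing chains exchanges `C`
and `C⁻¹`, which turns the statement about `C₋` into the one about `C₊`.
-/

variable {K : Type*} [Field K]

section Prime
variable {V : Type*} [AddCommGroup V] [Module K V]

/-- One forward step of the relation applied to a set: `C S = {v : ∃ u ∈ S, (u,v) ∈ C}`. -/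
def cstep (C : Submodule K (V × V)) (S : Set V) : Set V :=
  {v | ∃ u ∈ S, (u, v) ∈ C}

/-- One step of the inverse relation applied to a set. -/
def cstepInv (C : Submodule K (V × V)) (S : Set V) : Set V :=
  {v | ∃ u ∈ S, (v, u) ∈ C}

/-- `C' = ⋃ₙ Cⁿ 0`. -/
def cprime (C : Submodule K (V × V)) : Set V :=
  ⋃ n : ℕ, (cstep C)^[n] {0}

/-- `(C⁻¹)' = ⋃ₙ (C⁻¹)ⁿ 0`. -/
def cprimeInv (C : Submodule K (V × V)) : Set V :=
  ⋃ n : ℕ, (cstepInv C)^[n] {0}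

/-- `C'' = {v₀ : ∃ vₙ (n > 0) with vₙ ∈ C vₙ₊₁ for all n ≥ 0}`. -/
def cdoublePrime (C : Submodule K (V × V)) : Set V :=
  {v | ∃ f : ℕ → V, f 0 = v ∧ ∀ n : ℕ, (f (n + 1), f n) ∈ C}

/-- `(C⁻¹)''`. -/
def cdoublePrimeInv (C : Submodule K (V × V)) : Set V :=
  {v | ∃ f : ℕ → V, f 0 = v ∧ ∀ n : ℕ, (f n, f (n + 1)) ∈ C}

end Prime

section Splice
variable {V : Type*}

/-- `splice g h n = g n` and `splice g h (-n) = h n` for `n : ℕ` (when `h 0 = g 0`). -/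
def splice (g h : ℕ → V) : ℤ → V
  | .ofNat n => g n
  | .negSucc n => h (n + 1)

@[simp]
lemma splice_natCast (g h : ℕ → V) (n : ℕ) : splice g h n = g n :=
  rfl

end Splice

section LinearRelation
variable {V : Type*} [AddCommGroup V] [Module K V]

def relInv (C : Submodule K (V × V)) : Submodule K (V × V) :=
  C.comap (LinearEquiv.prodComm K V V).toLinearMap

@[simp]
lemma mem_relInv {C : Submodule K (V × V)} {x y : V} : (x, y) ∈ relInv C ↔ (y, x) ∈ C :=
  Iff.rfl

@[simp]
lemma relInv_relInv (C : Submodule K (V × V)) : relInv (relInv C) = C := by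
  ext ⟨x, y⟩
  simp

def IsNatChain (C : Submodule K (V × V)) (g : ℕ → V) : Prop :=
  ∀ n : ℕ, (g n, g (n + 1)) ∈ C

lemma cdoublePrime_eq_cdoublePrimeInv_relInv (C : Submodule K (V × V)) :
    cdoublePrime C = cdoublePrimeInv (relInv C) :=
  rfl

lemma cprime_eq_cprimeInv_relInv (C : Submodule K (V × V)) :
    cprime C = cprimeInv (relInv C) :=
  rfl

lemma mem_iterate_cstepInv_zero {C : Submodule K (V × V)} {v : V} (n : ℕ) :
    v ∈ (cstepInv C)^[n] {0} ↔ ∃ g : ℕ → V, IsNatChain C g ∧ g 0 = v ∧ ∀ k ≥ n, g k = 0 := by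
  induction n generalizing v with
  | zero =>
    refine ⟨fun hv => ⟨fun _ => 0, fun _ => C.zero_mem, hv.symm, fun _ _ => rfl⟩, ?_⟩
    rintro ⟨g, -, rfl, hg⟩
    exact hg 0 le_rfl
  | succ n ih =>
    rw [Function.iterate_succ_apply']
    constructor
    · rintro ⟨u, hu, hvu⟩
      obtain ⟨g, hg, rfl, hzero⟩ := ih.1 hu
      refine ⟨fun k => Nat.casesOn k v g, ?_, rfl, ?_⟩
      · rintro (_ | k)
        exacts [hvu, hg k]
      · rintro (_ | k) hk
        exacts [absurd hk (by omega), hzero k (by omega)]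
    · rintro ⟨g, hg, rfl, hzero⟩
      exact ⟨g 1, ih.2 ⟨fun k => g (k + 1), fun k => hg (k + 1), rfl,
        fun k hk => hzero (k + 1) (by omega)⟩, hg 0⟩

lemma mem_cprimeInv {C : Submodule K (V × V)} {v : V} :
    v ∈ cprimeInv C ↔ ∃ g : ℕ → V, IsNatChain C g ∧ g 0 = v ∧ ∃ N, ∀ k ≥ N, g k = 0 := by
  simp only [cprimeInv, Set.mem_iUnion, mem_iterate_cstepInv_zero]
  exact ⟨fun ⟨N, g, hg, hv, hN⟩ => ⟨g, hg, hv, N, hN⟩,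
    fun ⟨g, hg, hv, N, hN⟩ => ⟨N, g, hg, hv, hN⟩⟩

lemma IsCChain.isNatChain {C : Submodule K (V × V)} {f : ℤ → V} (hf : IsCChain C f) :
    IsNatChain C (fun n : ℕ => f n) := by
  intro n
  exact_mod_cast hf n

lemma IsCChain.comp_neg {C : Submodule K (V × V)} {f : ℤ → V} (hf : IsCChain C f) :
    IsCChain (relInv C) (fun n => f (-n)) := by
  intro n
  simpa [neg_add_eq_sub] using hf (-n - 1)

lemma isCChain_splice {C : Submodule K (V × V)} {g h : ℕ → V} (hg : IsNatChain C g)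
    (hh : IsNatChain (relInv C) h) (h0 : h 0 = g 0) : IsCChain C (splice g h) := by
  rintro (n | _ | n)
  · exact hg n
  · show (h 1, g 0) ∈ C
    rw [← h0]
    exact hh 0
  · exact hh (n + 1)

lemma exists_isCChain_iff (C : Submodule K (V × V)) (P : (ℕ → V) → Prop) (v : V) :
    (∃ f : ℤ → V, IsCChain C f ∧ f 0 = v ∧ P (fun n : ℕ => f n)) ↔
      v ∈ cdoublePrime C ∧ ∃ g : ℕ → V, IsNatChain C g ∧ g 0 = v ∧ P g := by
  constructor
  · rintro ⟨f, hf, rfl, hP⟩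
    exact ⟨⟨fun n : ℕ => f (-n), by simp, hf.comp_neg.isNatChain⟩, _, hf.isNatChain, rfl, hP⟩
  · rintro ⟨⟨h, rfl, hh⟩, g, hg, h0, hP⟩
    exact ⟨splice g h, isCChain_splice hg hh h0.symm, h0, hP⟩

lemma exists_int_eventually_zero_iff {f : ℤ → V} :
    (∃ N : ℤ, ∀ n ≥ N, f n = 0) ↔ ∃ N : ℕ, ∀ k ≥ N, f k = 0 := by
  constructor
  · rintro ⟨N, hN⟩
    exact ⟨N.toNat, fun k hk => hN k (by omega)⟩
  · rintro ⟨N, hN⟩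
    refine ⟨N, fun n hn => ?_⟩
    lift n to ℕ using by omega
    exact hN n (by omega)

lemma csharp_eq_inter (C : Submodule K (V × V)) :
    csharp C = cdoublePrime C ∩ cdoublePrimeInv C := by
  ext v
  simpa [csharp, cdoublePrimeInv, IsNatChain, and_comm] using
    exists_isCChain_iff C (fun _ => True) v

lemma cplus_eq_inter (C : Submodule K (V × V)) :
    cplus C = cdoublePrime C ∩ cprimeInv C := by
  ext v
  simp only [cplus, exists_int_eventually_zero_iff, Set.mem_ofPred_eq, Set.mem_inter_iff,
    mem_cprimeInv]
  exact exists_isCChain_iff C (fun g => ∃ N : ℕ, ∀ k ≥ N, g k = 0) v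

lemma cminus_eq_cplus_relInv (C : Submodule K (V × V)) : cminus C = cplus (relInv C) := by
  ext v
  constructor
  · rintro ⟨f, hf, rfl, N, hN⟩
    exact ⟨fun n => f (-n), hf.comp_neg, by simp, -N, fun n hn => hN (-n) (by omega)⟩
  · rintro ⟨f, hf, rfl, N, hN⟩
    exact ⟨fun n => f (-n), by simpa using hf.comp_neg, by simp, -N,
      fun n hn => hN (-n) (by omega)⟩

end LinearRelation

/-- `C^♯ = C'' ∩ (C⁻¹)''`, `C₊ = C'' ∩ (C⁻¹)'`, and `C₋ = (C⁻¹)'' ∩ C'`. -/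
theorem sharp_plus_minus_via_primes
    {V : Type*} [AddCommGroup V] [Module K V] (C : Submodule K (V × V)) :
    csharp C = cdoublePrime C ∩ cdoublePrimeInv C ∧
    cplus C = cdoublePrime C ∩ cprimeInv C ∧
    cminus C = cdoublePrimeInv C ∩ cprime C := by
  refine ⟨csharp_eq_inter C, cplus_eq_inter C, ?_⟩
  rw [cminus_eq_cplus_relInv, cplus_eq_inter, cprime_eq_cprimeInv_relInv,
    cdoublePrime_eq_cdoublePrimeInv_relInv, relInv_relInv]
end

section
/- Let 0 → (V₁,C₁) → (V₂,C₂) → (V₃,C₃) → 0 be an exact sequence of linear relations (meaning both 0 → V₁ → V₂ → V₃ → 0 and 0 → C₁ → C₂ → C₃ → 0 are exact sequences of vector spaces). If C₁^♯ = V₁ and C₃^♯ = V₃, then C₂^♯ = V₂. -/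
/-!
A point lies on a bi-infinite chain of a relation `C` exactly when chains can be continued
step by step in both directions, so `C^♯ = V` says that `C` is left and right total. Left
totality passes to the middle term of an exact sequence: lift a step of `C₃` from `g x` to
`C₂`, and correct the lift by the image of a step of `C₁` starting at the discrepancy, which
lies in `ker g = range f`. Right totality follows by applying this to the reversed relations.
-/

variable {K : Type*} [Field K]

section Exact
variable {V₁ V₂ V₃ : Type*} [AddCommGroup V₁] [Module K V₁]
  [AddCommGroup V₂] [Module K V₂] [AddCommGroup V₃] [Module K V₃]
  (C₁ : Submodule K (V₁ × V₁)) (C₂ : Submodule K (V₂ × V₂)) (C₃ : Submodule K (V₃ × V₃))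
  (f : V₁ →ₗ[K] V₂) (g : V₂ →ₗ[K] V₃)

/-- `0 → (V₁,C₁) → (V₂,C₂) → (V₃,C₃) → 0` is an exact sequence of linear relations:
both the sequence of underlying spaces and the sequence of relation subspaces are exact. -/
def IsExactSeqOfRelations : Prop :=
  Function.Injective f ∧ Function.Surjective g ∧ LinearMap.range f = LinearMap.ker g ∧
  (∀ p ∈ C₁, (f p.1, f p.2) ∈ C₂) ∧ (∀ p ∈ C₂, (g p.1, g p.2) ∈ C₃) ∧
  (∀ p ∈ C₃, ∃ q ∈ C₂, (g q.1, g q.2) = p) ∧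
  (∀ q ∈ C₂, (g q.1, g q.2) = (0 : V₃ × V₃) → ∃ p ∈ C₁, (f p.1, f p.2) = q)

end Exact

open Relator

theorem exists_int_chain_of_biTotal {α : Type*} {R : α → α → Prop} (hR : BiTotal R) (x : α) :
    ∃ a : ℤ → α, a 0 = x ∧ ∀ n, R (a n) (a (n + 1)) := by
  choose succ hsucc using hR.1
  choose pred hpred using hR.2
  let a : ℤ → α
    | .ofNat k => succ^[k] x
    | .negSucc k => pred^[k + 1] x
  refine ⟨a, rfl, ?_⟩
  rintro (k | _ | m)
  · show R (succ^[k] x) (succ^[k + 1] x)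
    rw [Function.iterate_succ_apply']
    exact hsucc _
  · exact hpred x
  · show R (pred^[m + 2] x) (pred^[m + 1] x)
    rw [Function.iterate_succ_apply']
    exact hpred _

section Relations

variable {V : Type*} [AddCommGroup V] [Module K V]

theorem csharp_eq_univ_iff (C : Submodule K (V × V)) :
    csharp C = Set.univ ↔ BiTotal fun x y => (x, y) ∈ C := by
  refine ⟨fun h => ⟨fun x => ?_, fun y => ?_⟩, fun h => Set.eq_univ_of_forall fun x => ?_⟩
  · obtain ⟨a, ha, rfl⟩ : x ∈ csharp C := h ▸ trivial
    exact ⟨a 1, ha 0⟩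
  · obtain ⟨a, ha, rfl⟩ : y ∈ csharp C := h ▸ trivial
    exact ⟨a (-1), ha (-1)⟩
  · obtain ⟨a, ha0, ha⟩ := exists_int_chain_of_biTotal h x
    exact ⟨a, ha, ha0⟩

def Submodule.reverse (C : Submodule K (V × V)) : Submodule K (V × V) :=
  C.comap (LinearEquiv.prodComm K V V).toLinearMap

end Relations

theorem leftTotal_of_exact {V₁ V₂ V₃ : Type*} [AddCommGroup V₁] [Module K V₁]
    [AddCommGroup V₂] [Module K V₂] [AddCommGroup V₃] [Module K V₃]
    {C₁ : Submodule K (V₁ × V₁)} {C₂ : Submodule K (V₂ × V₂)} {C₃ : Submodule K (V₃ × V₃)}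
    {f : V₁ →ₗ[K] V₂} {g : V₂ →ₗ[K] V₃} (hfg : LinearMap.range f = LinearMap.ker g)
    (hf : ∀ p ∈ C₁, (f p.1, f p.2) ∈ C₂) (hg : ∀ p ∈ C₃, ∃ q ∈ C₂, (g q.1, g q.2) = p)
    (h₁ : LeftTotal fun x y => (x, y) ∈ C₁) (h₃ : LeftTotal fun x y => (x, y) ∈ C₃) :
    LeftTotal fun x y => (x, y) ∈ C₂ := by
  intro x
  obtain ⟨z, hz⟩ := h₃ (g x)
  obtain ⟨q, hq, hqz⟩ := hg _ hz
  obtain ⟨a, ha⟩ : x - q.1 ∈ LinearMap.range f := by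
    rw [hfg, LinearMap.mem_ker, map_sub, (Prod.mk.inj hqz).1, sub_self]
  obtain ⟨b, hb⟩ := h₁ a
  have hx : x = q.1 + f a := by rw [ha, add_sub_cancel]
  exact ⟨q.2 + f b, hx ▸ C₂.add_mem hq (hf _ hb)⟩

/-- In an exact sequence of linear relations, if `C₁^♯ = V₁` and `C₃^♯ = V₃`
then `C₂^♯ = V₂`. -/
theorem sharp_of_exact
    {V₁ V₂ V₃ : Type*} [AddCommGroup V₁] [Module K V₁]
    [AddCommGroup V₂] [Module K V₂] [AddCommGroup V₃] [Module K V₃]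
    (C₁ : Submodule K (V₁ × V₁)) (C₂ : Submodule K (V₂ × V₂)) (C₃ : Submodule K (V₃ × V₃))
    (f : V₁ →ₗ[K] V₂) (g : V₂ →ₗ[K] V₃)
    (hex : IsExactSeqOfRelations C₁ C₂ C₃ f g)
    (h1 : csharp C₁ = Set.univ) (h3 : csharp C₃ = Set.univ) :
    csharp C₂ = Set.univ := by
  obtain ⟨-, -, hfg, hf, -, hg, -⟩ := hex
  rw [csharp_eq_univ_iff] at h1 h3 ⊢
  refine ⟨leftTotal_of_exact hfg hf hg h1.1 h3.1, ?_⟩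
  have hf' : ∀ p ∈ C₁.reverse, (f p.1, f p.2) ∈ C₂.reverse := fun p hp => hf p.swap hp
  have hg' : ∀ p ∈ C₃.reverse, ∃ q ∈ C₂.reverse, (g q.1, g q.2) = p := fun p hp =>
    let ⟨q, hq, hqp⟩ := hg p.swap hp
    ⟨q.swap, hq, congrArg Prod.swap hqp⟩
  exact leftTotal_of_exact hfg hf' hg' h1.2 h3.2
end

section
/- Let 0 → (V₁,C₁) → (V₂,C₂) → (V₃,C₃) → 0 be an exact sequence of linear relations, identifying V₁ with a subspace of V₂. If C₁^♭ = V₁ and C₃^♭ = 0, then C₂^♭ = V₁. -/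
variable {K : Type*} [Field K]

/-! `C ↦ C^♭` is functorial for linear maps compatible with the relations, since such maps send
chains to chains and preserve eventual vanishing. Hence `g` maps `C₂^♭` into `C₃^♭ = 0`, i.e. into
`ker g = V₁`, while `f` maps `C₁^♭ = V₁` into `C₂^♭`. -/

section Functoriality
variable {V W : Type*} [AddCommGroup V] [Module K V] [AddCommGroup W] [Module K W]
  {C : Submodule K (V × V)} {D : Submodule K (W × W)} {φ : V →ₗ[K] W}

theorem IsCChain.map (hφ : ∀ p ∈ C, (φ p.1, φ p.2) ∈ D) {u : ℤ → V} (hu : IsCChain C u) :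
    IsCChain D (φ ∘ u) :=
  fun n => hφ _ (hu n)

theorem mapsTo_cplus (hφ : ∀ p ∈ C, (φ p.1, φ p.2) ∈ D) : Set.MapsTo φ (cplus C) (cplus D) := by
  rintro _ ⟨u, hu, rfl, N, hN⟩
  exact ⟨φ ∘ u, hu.map hφ, rfl, N, fun n hn => by simp [hN n hn]⟩

theorem mapsTo_cminus (hφ : ∀ p ∈ C, (φ p.1, φ p.2) ∈ D) :
    Set.MapsTo φ (cminus C) (cminus D) := by
  rintro _ ⟨u, hu, rfl, N, hN⟩
  exact ⟨φ ∘ u, hu.map hφ, rfl, N, fun n hn => by simp [hN n hn]⟩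

theorem mapsTo_cflat (hφ : ∀ p ∈ C, (φ p.1, φ p.2) ∈ D) : Set.MapsTo φ (cflat C) (cflat D) := by
  rintro _ ⟨a, ha, b, hb, rfl⟩
  exact ⟨φ a, mapsTo_cplus hφ ha, φ b, mapsTo_cminus hφ hb, map_add φ a b⟩

end Functoriality

/-- In an exact sequence of linear relations, identifying `V₁` with its image in `V₂`,
if `C₁^♭ = V₁` and `C₃^♭ = 0` then `C₂^♭ = V₁`. -/
theorem flat_of_exact_middle
    {V₁ V₂ V₃ : Type*} [AddCommGroup V₁] [Module K V₁]
    [AddCommGroup V₂] [Module K V₂] [AddCommGroup V₃] [Module K V₃]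
    (C₁ : Submodule K (V₁ × V₁)) (C₂ : Submodule K (V₂ × V₂)) (C₃ : Submodule K (V₃ × V₃))
    (f : V₁ →ₗ[K] V₂) (g : V₂ →ₗ[K] V₃)
    (hex : IsExactSeqOfRelations C₁ C₂ C₃ f g)
    (h1 : cflat C₁ = Set.univ) (h3 : cflat C₃ = {0}) :
    cflat C₂ = Set.range f := by
  obtain ⟨-, -, hrange, h12, h23, -, -⟩ := hex
  refine Set.Subset.antisymm (fun v hv => ?_) ?_
  · have hgv : g v ∈ cflat C₃ := mapsTo_cflat h23 hv
    rw [h3] at hgv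
    rw [← LinearMap.coe_range, hrange]
    exact hgv
  · rintro _ ⟨w, rfl⟩
    exact mapsTo_cflat h12 (h1 ▸ Set.mem_univ w)
end

section
/- Let (V,C) be a linear relation with V = C^♯. Then every extension of Kronecker modules 0 → (V,C) → (W,D) → R₁ → 0 splits, where R₁ is the Kronecker module with X = K·x, Y = K·y, p(x) = 0, q(x) = y. -/
/-!
Lift the generator of `R₁` to some `x₀ ∈ X`. Since `πY (p x₀) = 0`, the vector `p x₀` comes
from some `v₀ ∈ V`, and `V = C^♯` gives `(v₀, w₀) ∈ C`; subtracting the image of this element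
from `x₀` yields a lift `x₁` with `p x₁ = 0`. Then `K x₁` and `K (q x₁)` form a copy of `R₁`
complementary to `(V, C)`, and projecting along it splits both exact sequences compatibly
with `p` and `q`.
-/

variable {K : Type*} [Field K]

theorem exists_mem_of_mem_csharp {V : Type*} [AddCommGroup V] [Module K V]
    {C : Submodule K (V × V)} {v : V} (hv : v ∈ csharp C) : ∃ w, (v, w) ∈ C := by
  obtain ⟨f, hf, rfl⟩ := hv
  exact ⟨f 1, hf 0⟩

theorem LinearMap.exists_retraction_of_range_eq_ker {R A X : Type*} [Ring R]
    [AddCommGroup A] [Module R A] [AddCommGroup X] [Module R X]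
    {i : A →ₗ[R] X} {π : X →ₗ[R] R} (hi : Function.Injective i)
    (hex : LinearMap.range i = LinearMap.ker π) {x₁ : X} (hx₁ : π x₁ = 1) :
    ∃ r : X →ₗ[R] A, (∀ a, r (i a) = a) ∧ ∀ x, i (r x) = x - π x • x₁ := by
  let d : X →ₗ[R] X := LinearMap.id - LinearMap.toSpanSingleton R X x₁ ∘ₗ π
  have hd : ∀ x, d x ∈ LinearMap.range i := fun x => by
    rw [hex]
    simp [d, hx₁]
  let r := (LinearEquiv.ofInjective i hi).symm.toLinearMap ∘ₗ d.codRestrict _ hd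
  have hr : ∀ x, i (r x) = x - π x • x₁ := fun x => by
    simp [r, d, LinearEquiv.ofInjective_symm_apply]
  refine ⟨r, fun a => hi ?_, hr⟩
  rw [hr, (LinearMap.exact_iff.mpr hex.symm).apply_apply_eq_zero, zero_smul, sub_zero]

theorem ext_R1_splits_general
    {V : Type*} [AddCommGroup V] [Module K V] (C : Submodule K (V × V))
    (hV : csharp C = Set.univ)
    {X Y : Type*} [AddCommGroup X] [Module K X] [AddCommGroup Y] [Module K Y]
    (p q : X →ₗ[K] Y)
    (iX : ↥C →ₗ[K] X) (iY : V →ₗ[K] Y) (πX : X →ₗ[K] K) (πY : Y →ₗ[K] K)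
    (hiX : Function.Injective iX) (hiY : Function.Injective iY)
    (hπX : Function.Surjective πX)
    (hexX : LinearMap.range iX = LinearMap.ker πX)
    (hexY : LinearMap.range iY = LinearMap.ker πY)
    (hc1 : ∀ c : ↥C, p (iX c) = iY (c : V × V).1)
    (hc2 : ∀ c : ↥C, q (iX c) = iY (c : V × V).2)
    (hc3 : ∀ x : X, πY (p x) = 0)
    (hc4 : ∀ x : X, πY (q x) = πX x) :
    ∃ (sX : X →ₗ[K] ↥C) (sY : Y →ₗ[K] V),
      (∀ c : ↥C, sX (iX c) = c) ∧ (∀ v : V, sY (iY v) = v) ∧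
      (∀ x : X, ((sX x : V × V)).1 = sY (p x)) ∧
      (∀ x : X, ((sX x : V × V)).2 = sY (q x)) := by
  obtain ⟨x₀, hx₀⟩ := hπX 1
  obtain ⟨v₀, hv₀⟩ : p x₀ ∈ LinearMap.range iY := hexY ▸ hc3 x₀
  obtain ⟨w₀, hw₀⟩ := exists_mem_of_mem_csharp (hV ▸ Set.mem_univ v₀)
  have hπXi : ∀ c, πX (iX c) = 0 := (LinearMap.exact_iff.mpr hexX.symm).apply_apply_eq_zero
  set x₁ := x₀ - iX ⟨(v₀, w₀), hw₀⟩
  have hπx₁ : πX x₁ = 1 := by simp [x₁, hπXi, hx₀]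
  have hpx₁ : p x₁ = 0 := by simp [x₁, hc1, hv₀]
  obtain ⟨sX, hsXi, hisX⟩ := LinearMap.exists_retraction_of_range_eq_ker hiX hexX hπx₁
  obtain ⟨sY, hsYi, hisY⟩ :=
    LinearMap.exists_retraction_of_range_eq_ker hiY hexY (hπx₁ ▸ hc4 x₁)
  refine ⟨sX, sY, hsXi, hsYi, fun x => hiY ?_, fun x => hiY ?_⟩
  · rw [← hc1, hisX, hisY, map_sub, map_smul, hpx₁, hc3, smul_zero, zero_smul]
  · rw [← hc2, hisX, hisY, map_sub, map_smul, hc4]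

/-- If `V = C^♯`, every extension of Kronecker modules
`0 → (C,V,pr₁,pr₂) → (X,Y,p,q) → R₁ → 0` splits, where `R₁` has one-dimensional
`X`- and `Y`-spaces with `p = 0` and `q` an isomorphism. The extension is given by
injections `iX, iY`, surjections `πX, πY`, exactness, and commutation with the
structure maps; a splitting is a retraction of Kronecker modules. -/
theorem ext_R1_splits
    {V : Type*} [AddCommGroup V] [Module K V] (C : Submodule K (V × V))
    (hV : csharp C = Set.univ)
    {X Y : Type*} [AddCommGroup X] [Module K X] [AddCommGroup Y] [Module K Y]
    (p q : X →ₗ[K] Y)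
    (iX : ↥C →ₗ[K] X) (iY : V →ₗ[K] Y) (πX : X →ₗ[K] K) (πY : Y →ₗ[K] K)
    (hiX : Function.Injective iX) (hiY : Function.Injective iY)
    (hπX : Function.Surjective πX) (hπY : Function.Surjective πY)
    (hexX : LinearMap.range iX = LinearMap.ker πX)
    (hexY : LinearMap.range iY = LinearMap.ker πY)
    (hc1 : ∀ c : ↥C, p (iX c) = iY (c : V × V).1)
    (hc2 : ∀ c : ↥C, q (iX c) = iY (c : V × V).2)
    (hc3 : ∀ x : X, πY (p x) = 0)
    (hc4 : ∀ x : X, πY (q x) = πX x) :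
    ∃ (sX : X →ₗ[K] ↥C) (sY : Y →ₗ[K] V),
      (∀ c : ↥C, sX (iX c) = c) ∧ (∀ v : V, sY (iY v) = v) ∧
      (∀ x : X, ((sX x : V × V)).1 = sY (p x)) ∧
      (∀ x : X, ((sX x : V × V)).2 = sY (q x)) :=
  ext_R1_splits_general C hV p q iX iY πX πY hiX hiY hπX hexX hexY hc1 hc2 hc3 hc4
end

section
/- Let (V,C) be a linear relation with V = C^♯, and let M be a finite-dimensional indecomposable Kronecker module that is preprojective, 0-regular, or ∞-regular. Then Ext¹(M,(V,C)) = 0 in the category of Kronecker modules. -/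
variable {K : Type*} [Field K]

/-!
Choose any retractions `rX`, `rY` of the inclusions of `(C, V)` into the extension. They fail
to be a morphism of Kronecker modules by a defect that vanishes on `C`, so it factors through
`M`, and the extension splits once this defect is corrected by a linear map `K^b → V`: once the
1-cochain it defines is a coboundary. For `Pₙ`, `Zₙ` and `Rₙ` the coboundary equations are
chain equations `(uₖ + fₖ, wₖ + fₖ₊₁) ∈ C` along a path, with `f₀ = 0` (for `Pₙ` and `Rₙ`) or
`fₙ = 0` (for `Zₙ`). As `V = C^♯`, the relation `C` is total and surjective, so these equations
are solved step by step, forwards from `f₀` or backwards from `fₙ`.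
-/

theorem LinearMap.comp_comp_eq_self_of_ker_le {R A X Z W : Type*} [Ring R] [AddCommGroup A]
    [Module R A] [AddCommGroup X] [Module R X] [AddCommGroup Z] [Module R Z] [AddCommGroup W]
    [Module R W] {i : A →ₗ[R] X} {π : X →ₗ[R] Z} {t : Z →ₗ[R] X} (hker : ker π ≤ range i)
    (ht : π ∘ₗ t = id) {f : X →ₗ[R] W} (hf : ∀ c, f (i c) = 0) : f ∘ₗ t ∘ₗ π = f := by
  ext x
  obtain ⟨c, hc⟩ : x - t (π x) ∈ range i := hker (by simp [← comp_apply π t, ht])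
  have hfx : f x - f (t (π x)) = 0 := by rw [← map_sub, ← hc, hf c]
  exact (sub_eq_zero.mp hfx).symm

section

variable {V : Type*} [AddCommGroup V] [Module K V] {C : Submodule K (V × V)}

theorem exists_image_of_csharp_eq_univ (hV : csharp C = Set.univ) (x : V) :
    ∃ y, (x, y) ∈ C := by
  obtain ⟨f, hf, rfl⟩ : x ∈ csharp C := hV ▸ Set.mem_univ x
  exact ⟨f 1, by simpa using hf 0⟩

theorem exists_preimage_of_csharp_eq_univ (hV : csharp C = Set.univ) (y : V) :
    ∃ x, (x, y) ∈ C := by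
  obtain ⟨f, hf, rfl⟩ : y ∈ csharp C := hV ▸ Set.mem_univ y
  exact ⟨f (-1), by simpa using hf (-1)⟩

theorem exists_chain_from_zero (hC : ∀ x, ∃ y, (x, y) ∈ C) (u w : ℕ → V) :
    ∃ f : ℕ → V, f 0 = 0 ∧ ∀ k, (u k + f k, w k + f (k + 1)) ∈ C := by
  choose F hF using hC
  let f : ℕ → V := fun n => Nat.rec 0 (fun k fk => F (u k + fk) - w k) n
  exact ⟨f, rfl, fun k => by simpa [f] using hF (u k + f k)⟩

theorem exists_chain_to_zero (hC : ∀ y, ∃ x, (x, y) ∈ C) (n : ℕ) (u w : ℕ → V) :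
    ∃ f : ℕ → V, f n = 0 ∧ ∀ k < n, (u k + f k, w k + f (k + 1)) ∈ C := by
  induction n generalizing u w with
  | zero => exact ⟨0, rfl, by simp⟩
  | succ n ih =>
    obtain ⟨g, hgn, hg⟩ := ih (u ∘ Nat.succ) (w ∘ Nat.succ)
    obtain ⟨x, hx⟩ := hC (w 0 + g 0)
    refine ⟨fun | 0 => x - u 0 | k + 1 => g k, hgn, fun k hk => ?_⟩
    cases k with
    | zero => simpa using hx
    | succ k => exact hg k (by omega)

theorem Fin.sum_ite_val_smul (f : ℕ → V) (b m : ℕ) :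
    ∑ j : Fin b, (if (j : ℕ) = m then (1 : K) else 0) • f j = if m < b then f m else 0 := by
  simp only [ite_smul, one_smul, zero_smul]
  rw [Fin.sum_univ_eq_sum_range (fun j => if j = m then f j else 0), Finset.sum_ite_eq']
  simp only [Finset.mem_range]

theorem Fin.sum_ite_val_succ_smul (f : ℕ → V) (hf : f 0 = 0) (b m : ℕ) :
    ∑ j : Fin b, (if (j : ℕ) + 1 = m then (1 : K) else 0) • f (j + 1) =
      if m < b + 1 then f m else 0 := by
  simp only [ite_smul, one_smul, zero_smul]
  rw [Fin.sum_univ_eq_sum_range (fun j => if j + 1 = m then f (j + 1) else 0)]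
  have hshift := Finset.sum_range_succ' (fun j => if j = m then f j else 0) b
  simp only [Finset.sum_ite_eq', Finset.mem_range, hf, ite_self, add_zero] at hshift
  exact hshift.symm

/-- `Ext¹(M, (V, C)) = 0` for `M = (K^a, K^b, Ap, Aq)`, computed from the standard projective
resolution of `M`: every 1-cochain `(u, w) ∈ Hom(K^a, V)²` is a coboundary. -/
def CoboundarySurjective (C : Submodule K (V × V)) {a b : ℕ} (Ap Aq : Matrix (Fin b) (Fin a) K) :
    Prop :=
  ∀ u w : Fin a → V, ∃ v : Fin b → V,
    ∀ i, (u i + ∑ j, Ap j i • v j, w i + ∑ j, Aq j i • v j) ∈ C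

theorem coboundarySurjective_preprojective (hC : ∀ x, ∃ y, (x, y) ∈ C) {a : ℕ}
    {Ap Aq : Matrix (Fin (a + 1)) (Fin a) K}
    (hAp : ∀ j i, Ap j i = if (j : ℕ) = (i : ℕ) then 1 else 0)
    (hAq : ∀ j i, Aq j i = if (j : ℕ) = (i : ℕ) + 1 then 1 else 0) :
    CoboundarySurjective C Ap Aq := by
  intro u w
  obtain ⟨f, -, hf⟩ :=
    exists_chain_from_zero hC (Function.extend Fin.val u 0) (Function.extend Fin.val w 0)
  refine ⟨fun j => f j, fun i => ?_⟩
  simp only [hAp, hAq, Fin.sum_ite_val_smul, if_pos (Nat.lt_succ_of_lt i.isLt),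
    if_pos (Nat.succ_lt_succ i.isLt)]
  simpa only [Fin.val_injective.extend_apply] using hf i

theorem coboundarySurjective_zeroRegular (hC : ∀ y, ∃ x, (x, y) ∈ C) {a : ℕ}
    {Ap Aq : Matrix (Fin a) (Fin a) K}
    (hAp : ∀ j i, Ap j i = if (j : ℕ) = (i : ℕ) then 1 else 0)
    (hAq : ∀ j i, Aq j i = if (j : ℕ) = (i : ℕ) + 1 then 1 else 0) :
    CoboundarySurjective C Ap Aq := by
  intro u w
  obtain ⟨f, hfa, hf⟩ :=
    exists_chain_to_zero hC a (Function.extend Fin.val u 0) (Function.extend Fin.val w 0)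
  refine ⟨fun j => f j, fun i => ?_⟩
  have hsucc : (if (i : ℕ) + 1 < a then f (i + 1) else 0) = f (i + 1) := by
    split_ifs with h
    · rfl
    · rw [show (i : ℕ) + 1 = a by omega, hfa]
  simp only [hAp, hAq, Fin.sum_ite_val_smul, if_pos i.isLt, hsucc]
  simpa only [Fin.val_injective.extend_apply] using hf i i.isLt

theorem coboundarySurjective_infiniteRegular (hC : ∀ x, ∃ y, (x, y) ∈ C) {a : ℕ}
    {Ap Aq : Matrix (Fin a) (Fin a) K}
    (hAp : ∀ j i, Ap j i = if (j : ℕ) + 1 = (i : ℕ) then 1 else 0)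
    (hAq : ∀ j i, Aq j i = if (j : ℕ) = (i : ℕ) then 1 else 0) :
    CoboundarySurjective C Ap Aq := by
  intro u w
  obtain ⟨f, hf0, hf⟩ :=
    exists_chain_from_zero hC (Function.extend Fin.val u 0) (Function.extend Fin.val w 0)
  refine ⟨fun j => f (j + 1), fun i => ?_⟩
  simp only [hAp, hAq, Fin.sum_ite_val_smul (fun k => f (k + 1)),
    Fin.sum_ite_val_succ_smul f hf0, if_pos i.isLt, if_pos (Nat.lt_succ_of_lt i.isLt)]
  simpa only [Fin.val_injective.extend_apply] using hf i

theorem CoboundarySurjective.exists_linearMap {a b : ℕ} {Ap Aq : Matrix (Fin b) (Fin a) K}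
    (hC : CoboundarySurjective C Ap Aq) (Dp Dq : (Fin a → K) →ₗ[K] V) :
    ∃ g : (Fin b → K) →ₗ[K] V, ∀ ξ, (Dp ξ + g (Ap.mulVecLin ξ), Dq ξ + g (Aq.mulVecLin ξ)) ∈ C := by
  obtain ⟨v, hv⟩ := hC (fun i => Dp (Pi.single i 1)) (fun i => Dq (Pi.single i 1))
  let g := Fintype.linearCombination K v
  let Φ := (Dp + g ∘ₗ Ap.mulVecLin).prod (Dq + g ∘ₗ Aq.mulVecLin)
  have hΦ : ⊤ ≤ C.comap Φ := by
    rw [← (Pi.basisFun K (Fin a)).span_eq, Submodule.span_le]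
    rintro _ ⟨i, rfl⟩
    simpa [Φ, g, Fintype.linearCombination_apply, Matrix.mulVec_single_one] using hv i
  exact ⟨g, fun ξ => hΦ Submodule.mem_top⟩

theorem exists_splitting_of_coboundarySurjective {a b : ℕ} {Ap Aq : Matrix (Fin b) (Fin a) K}
    (hCob : CoboundarySurjective C Ap Aq)
    {X Y : Type*} [AddCommGroup X] [Module K X] [AddCommGroup Y] [Module K Y]
    {p q : X →ₗ[K] Y} {iX : ↥C →ₗ[K] X} {iY : V →ₗ[K] Y}
    {πX : X →ₗ[K] (Fin a → K)} {πY : Y →ₗ[K] (Fin b → K)}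
    (hiX : Function.Injective iX) (hiY : Function.Injective iY) (hπX : Function.Surjective πX)
    (hexX : LinearMap.range iX = LinearMap.ker πX) (hexY : LinearMap.range iY ≤ LinearMap.ker πY)
    (hc1 : ∀ c : ↥C, p (iX c) = iY (c : V × V).1)
    (hc2 : ∀ c : ↥C, q (iX c) = iY (c : V × V).2)
    (hc3 : ∀ x : X, πY (p x) = Ap.mulVecLin (πX x))
    (hc4 : ∀ x : X, πY (q x) = Aq.mulVecLin (πX x)) :
    ∃ (sX : X →ₗ[K] ↥C) (sY : Y →ₗ[K] V),
      (∀ c : ↥C, sX (iX c) = c) ∧ (∀ v : V, sY (iY v) = v) ∧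
      (∀ x : X, ((sX x : V × V)).1 = sY (p x)) ∧
      (∀ x : X, ((sX x : V × V)).2 = sY (q x)) := by
  obtain ⟨rX, hrX⟩ := iX.exists_leftInverse_of_injective (LinearMap.ker_eq_bot.mpr hiX)
  obtain ⟨rY, hrY⟩ := iY.exists_leftInverse_of_injective (LinearMap.ker_eq_bot.mpr hiY)
  obtain ⟨tX, htX⟩ := πX.exists_rightInverse_of_surjective (LinearMap.range_eq_top.mpr hπX)
  have hrXiX (c : ↥C) : rX (iX c) = c := LinearMap.congr_fun hrX c
  have hrYiY (v : V) : rY (iY v) = v := LinearMap.congr_fun hrY v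
  have hπiX (c : ↥C) : πX (iX c) = 0 := hexX.le (LinearMap.mem_range_self iX c)
  have hπiY (v : V) : πY (iY v) = 0 := hexY (LinearMap.mem_range_self iY v)
  let δp := rY ∘ₗ p - LinearMap.fst K V V ∘ₗ C.subtype ∘ₗ rX
  let δq := rY ∘ₗ q - LinearMap.snd K V V ∘ₗ C.subtype ∘ₗ rX
  have hδp : δp ∘ₗ tX ∘ₗ πX = δp :=
    LinearMap.comp_comp_eq_self_of_ker_le hexX.ge htX (fun c => by simp [δp, hc1, hrXiX, hrYiY])
  have hδq : δq ∘ₗ tX ∘ₗ πX = δq :=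
    LinearMap.comp_comp_eq_self_of_ker_le hexX.ge htX (fun c => by simp [δq, hc2, hrXiX, hrYiY])
  obtain ⟨g, hg⟩ := hCob.exists_linearMap (δp ∘ₗ tX) (δq ∘ₗ tX)
  let cX : (Fin a → K) →ₗ[K] ↥C :=
    ((δp ∘ₗ tX + g ∘ₗ Ap.mulVecLin).prod (δq ∘ₗ tX + g ∘ₗ Aq.mulVecLin)).codRestrict C hg
  have hcX (ξ : Fin a → K) :
      (cX ξ : V × V) = (δp (tX ξ) + g (Ap.mulVecLin ξ), δq (tX ξ) + g (Aq.mulVecLin ξ)) := rfl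
  refine ⟨rX + cX ∘ₗ πX, rY + g ∘ₗ πY, fun c => ?_, fun v => ?_, fun x => ?_, fun x => ?_⟩
  · simp [hrXiX, hπiX]
  · simp [hrYiY, hπiY]
  · have hx : δp (tX (πX x)) = δp x := LinearMap.congr_fun hδp x
    simp only [LinearMap.add_apply, LinearMap.comp_apply, Submodule.coe_add, Prod.fst_add, hcX,
      hx, hc3]
    simp only [δp, LinearMap.sub_apply, LinearMap.comp_apply, Submodule.subtype_apply,
      LinearMap.fst_apply]
    abel
  · have hx : δq (tX (πX x)) = δq x := LinearMap.congr_fun hδq x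
    simp only [LinearMap.add_apply, LinearMap.comp_apply, Submodule.coe_add, Prod.snd_add, hcX,
      hx, hc4]
    simp only [δq, LinearMap.sub_apply, LinearMap.comp_apply, Submodule.subtype_apply,
      LinearMap.snd_apply]
    abel

end

theorem ext_vanishes_preproj_regular_general
    {V : Type*} [AddCommGroup V] [Module K V] (C : Submodule K (V × V))
    (hV : csharp C = Set.univ)
    (a b : ℕ) (Ap Aq : Matrix (Fin b) (Fin a) K)
    (hM : -- preprojective Pₙ : dim X = n, dim Y = n+1, p xᵢ = yᵢ, q xᵢ = yᵢ₊₁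
      (b = a + 1 ∧ (∀ j i, Ap j i = if (j : ℕ) = (i : ℕ) then 1 else 0) ∧
        (∀ j i, Aq j i = if (j : ℕ) = (i : ℕ) + 1 then 1 else 0)) ∨
      -- 0-regular Zₙ (n ≥ 1) : p = id, q the nilpotent shift
      (b = a ∧ 1 ≤ a ∧ (∀ j i, Ap j i = if (j : ℕ) = (i : ℕ) then 1 else 0) ∧
        (∀ j i, Aq j i = if (j : ℕ) = (i : ℕ) + 1 then 1 else 0)) ∨
      -- ∞-regular Rₙ (n ≥ 1) : p the nilpotent shift, q = id
      (b = a ∧ 1 ≤ a ∧ (∀ j i, Ap j i = if (j : ℕ) + 1 = (i : ℕ) then 1 else 0) ∧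
        (∀ j i, Aq j i = if (j : ℕ) = (i : ℕ) then 1 else 0)))
    {X Y : Type*} [AddCommGroup X] [Module K X] [AddCommGroup Y] [Module K Y]
    (p q : X →ₗ[K] Y)
    (iX : ↥C →ₗ[K] X) (iY : V →ₗ[K] Y)
    (πX : X →ₗ[K] (Fin a → K)) (πY : Y →ₗ[K] (Fin b → K))
    (hiX : Function.Injective iX) (hiY : Function.Injective iY)
    (hπX : Function.Surjective πX)
    (hexX : LinearMap.range iX = LinearMap.ker πX)
    (hexY : LinearMap.range iY = LinearMap.ker πY)
    (hc1 : ∀ c : ↥C, p (iX c) = iY (c : V × V).1)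
    (hc2 : ∀ c : ↥C, q (iX c) = iY (c : V × V).2)
    (hc3 : ∀ x : X, πY (p x) = Ap.mulVecLin (πX x))
    (hc4 : ∀ x : X, πY (q x) = Aq.mulVecLin (πX x)) :
    ∃ (sX : X →ₗ[K] ↥C) (sY : Y →ₗ[K] V),
      (∀ c : ↥C, sX (iX c) = c) ∧ (∀ v : V, sY (iY v) = v) ∧
      (∀ x : X, ((sX x : V × V)).1 = sY (p x)) ∧
      (∀ x : X, ((sX x : V × V)).2 = sY (q x)) := by
  have hCob : CoboundarySurjective C Ap Aq := by
    rcases hM with ⟨rfl, hAp, hAq⟩ | ⟨rfl, -, hAp, hAq⟩ | ⟨rfl, -, hAp, hAq⟩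
    · exact coboundarySurjective_preprojective (exists_image_of_csharp_eq_univ hV) hAp hAq
    · exact coboundarySurjective_zeroRegular (exists_preimage_of_csharp_eq_univ hV) hAp hAq
    · exact coboundarySurjective_infiniteRegular (exists_image_of_csharp_eq_univ hV) hAp hAq
  exact exists_splitting_of_coboundarySurjective hCob hiX hiY hπX hexX hexY.le hc1 hc2 hc3 hc4

/-- Let `(V,C)` be a linear relation with `V = C^♯`, and let `M` be a
finite-dimensional indecomposable Kronecker module which is preprojective `Pₙ`,
0-regular `Zₙ` or ∞-regular `Rₙ` (described by its structure matrices `Ap`, `Aq`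
in the standard bases). Then `Ext¹(M,(V,C)) = 0`: every extension of Kronecker
modules `0 → (C,V,pr₁,pr₂) → (X,Y,p,q) → M → 0` splits. -/
theorem ext_vanishes_preproj_regular
    {V : Type*} [AddCommGroup V] [Module K V] (C : Submodule K (V × V))
    (hV : csharp C = Set.univ)
    (a b : ℕ) (Ap Aq : Matrix (Fin b) (Fin a) K)
    (hM : -- preprojective Pₙ : dim X = n, dim Y = n+1, p xᵢ = yᵢ, q xᵢ = yᵢ₊₁
      (b = a + 1 ∧ (∀ j i, Ap j i = if (j : ℕ) = (i : ℕ) then 1 else 0) ∧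
        (∀ j i, Aq j i = if (j : ℕ) = (i : ℕ) + 1 then 1 else 0)) ∨
      -- 0-regular Zₙ (n ≥ 1) : p = id, q the nilpotent shift
      (b = a ∧ 1 ≤ a ∧ (∀ j i, Ap j i = if (j : ℕ) = (i : ℕ) then 1 else 0) ∧
        (∀ j i, Aq j i = if (j : ℕ) = (i : ℕ) + 1 then 1 else 0)) ∨
      -- ∞-regular Rₙ (n ≥ 1) : p the nilpotent shift, q = id
      (b = a ∧ 1 ≤ a ∧ (∀ j i, Ap j i = if (j : ℕ) + 1 = (i : ℕ) then 1 else 0) ∧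
        (∀ j i, Aq j i = if (j : ℕ) = (i : ℕ) then 1 else 0)))
    {X Y : Type*} [AddCommGroup X] [Module K X] [AddCommGroup Y] [Module K Y]
    (p q : X →ₗ[K] Y)
    (iX : ↥C →ₗ[K] X) (iY : V →ₗ[K] Y)
    (πX : X →ₗ[K] (Fin a → K)) (πY : Y →ₗ[K] (Fin b → K))
    (hiX : Function.Injective iX) (hiY : Function.Injective iY)
    (hπX : Function.Surjective πX) (hπY : Function.Surjective πY)
    (hexX : LinearMap.range iX = LinearMap.ker πX)
    (hexY : LinearMap.range iY = LinearMap.ker πY)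
    (hc1 : ∀ c : ↥C, p (iX c) = iY (c : V × V).1)
    (hc2 : ∀ c : ↥C, q (iX c) = iY (c : V × V).2)
    (hc3 : ∀ x : X, πY (p x) = Ap.mulVecLin (πX x))
    (hc4 : ∀ x : X, πY (q x) = Aq.mulVecLin (πX x)) :
    ∃ (sX : X →ₗ[K] ↥C) (sY : Y →ₗ[K] V),
      (∀ c : ↥C, sX (iX c) = c) ∧ (∀ v : V, sY (iY v) = v) ∧
      (∀ x : X, ((sX x : V × V)).1 = sY (p x)) ∧
      (∀ x : X, ((sX x : V × V)).2 = sY (q x)) :=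
  ext_vanishes_preproj_regular_general C hV a b Ap Aq hM p q iX iY πX πY hiX hiY hπX hexX hexY hc1
    hc2 hc3 hc4
end

section
/- Let (V,C) be a linear relation and let M = I_n be a finite-dimensional preinjective Kronecker module (n ≥ 0). Then every morphism of Kronecker modules M → (V/C^♭, C/C|_{C^♭}) is zero, where the target is the quotient relation with underlying space V/C^♭ and relation the image of C in (V/C^♭)⊕(V/C^♭). -/
variable {K : Type*} [Field K]

/-!
Put `F = C₊ + R` and `B = C₋ + I`, where `R` consists of the ends of finite chains starting at `0`
and `I` of the starts of infinite forward chains. Both contain `C^♭`; `F` is stable under forward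
`C`-steps (shift the `C₊`-chain one step) and `B` under backward ones. Moreover `F ∩ B ⊆ C^♭`:
if `p + μ = m + r` with `p ∈ C₊`, `μ ∈ R`, `m ∈ C₋`, `r ∈ I`, then `μ ∈ I` as well, and gluing its
finite chain from `0` to an infinite forward chain puts `μ` in `C₋`.

Lifting a morphism `Iₙ → (V/C^♭, C/C|_{C^♭})` along the basis `x₀, …, xₙ` gives pairs
`(cᵢ, dᵢ) ∈ C` with `c₀, dₙ ∈ C^♭` and `dᵢ ≡ cᵢ₊₁` modulo `C^♭`. Forward induction puts every `cᵢ`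
in `F`, backward induction in `B`, so `cᵢ ∈ C^♭`, and the morphism vanishes on `x₀, …, xₙ`.
-/

open Filter Matrix

section Chains
variable {V : Type*} [AddCommGroup V] [Module K V] (C : Submodule K (V × V))

def eventuallyZero {ι : Type*} (l : Filter ι) : Submodule K (ι → V) where
  carrier := {f | ∀ᶠ i in l, f i = 0}
  add_mem' ha hb := by filter_upwards [ha, hb] with i h₁ h₂; simp [h₁, h₂]
  zero_mem' := Eventually.of_forall fun _ => rfl
  smul_mem' c f hf := by filter_upwards [hf] with i h; simp [h]

def linkedSeqs {ι : Type*} (σ τ : ι → ι) : Submodule K (ι → V) where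
  carrier := {f | ∀ i, (f (σ i), f (τ i)) ∈ C}
  add_mem' ha hb i := C.add_mem (ha i) (hb i)
  zero_mem' _ := C.zero_mem
  smul_mem' c _ hf i := C.smul_mem c (hf i)

noncomputable def plusSubmodule : Submodule K V :=
  (linkedSeqs C id (· + 1) ⊓ eventuallyZero atTop).map (LinearMap.proj (0 : ℤ))

noncomputable def minusSubmodule : Submodule K V :=
  (linkedSeqs C id (· + 1) ⊓ eventuallyZero atBot).map (LinearMap.proj (0 : ℤ))

noncomputable def flatSubmodule : Submodule K V := plusSubmodule C ⊔ minusSubmodule C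

def forwardInfinite : Submodule K V :=
  (linkedSeqs C id (· + 1)).map (LinearMap.proj (0 : ℕ))

/-- Ends `v = g 0` of finite chains `0 = g N → ⋯ → g 1 → g 0`. -/
def reachableFromZero : Submodule K V :=
  (linkedSeqs C (· + 1) id ⊓ eventuallyZero atTop).map (LinearMap.proj (0 : ℕ))

noncomputable def forwardHull : Submodule K V := plusSubmodule C ⊔ reachableFromZero C

noncomputable def backwardHull : Submodule K V := minusSubmodule C ⊔ forwardInfinite C

variable {C}

theorem mem_plusSubmodule {v : V} : v ∈ plusSubmodule C ↔ v ∈ cplus C :=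
  ⟨fun ⟨f, ⟨hf, hfz⟩, hf0⟩ => ⟨f, hf, hf0, eventually_atTop.1 hfz⟩,
    fun ⟨f, hf, hf0, hfz⟩ => ⟨f, ⟨hf, eventually_atTop.2 hfz⟩, hf0⟩⟩

theorem mem_minusSubmodule {v : V} : v ∈ minusSubmodule C ↔ v ∈ cminus C :=
  ⟨fun ⟨f, ⟨hf, hfz⟩, hf0⟩ => ⟨f, hf, hf0, eventually_atBot.1 hfz⟩,
    fun ⟨f, hf, hf0, hfz⟩ => ⟨f, ⟨hf, eventually_atBot.2 hfz⟩, hf0⟩⟩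

theorem coe_flatSubmodule : (flatSubmodule C : Set V) = cflat C := by
  ext v
  rw [SetLike.mem_coe, flatSubmodule, Submodule.mem_sup]
  simp only [mem_plusSubmodule, mem_minusSubmodule]
  exact ⟨fun ⟨a, ha, b, hb, h⟩ => ⟨a, ha, b, hb, h.symm⟩,
    fun ⟨a, ha, b, hb, h⟩ => ⟨a, ha, b, hb, h.symm⟩⟩

theorem plusSubmodule_le_forwardInfinite : plusSubmodule C ≤ forwardInfinite C := by
  rintro _ ⟨f, ⟨hf, -⟩, rfl⟩
  exact ⟨fun k => f k, fun k => by simpa using hf k, rfl⟩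

theorem minusSubmodule_le_forwardInfinite : minusSubmodule C ≤ forwardInfinite C := by
  rintro _ ⟨f, ⟨hf, -⟩, rfl⟩
  exact ⟨fun k => f k, fun k => by simpa using hf k, rfl⟩

theorem minusSubmodule_le_reachableFromZero : minusSubmodule C ≤ reachableFromZero C := by
  rintro _ ⟨f, ⟨hf, hfz⟩, rfl⟩
  refine ⟨fun k => f (-k), ⟨fun k => ?_, ?_⟩, by simp⟩
  · simpa [neg_add_cancel_right] using hf (-(k + 1 : ℤ))
  · exact (tendsto_neg_atTop_atBot.comp tendsto_natCast_atTop_atTop).eventually hfz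

theorem mem_forwardInfinite_of_step {a b : V} (hab : (a, b) ∈ C) (hb : b ∈ forwardInfinite C) :
    a ∈ forwardInfinite C := by
  obtain ⟨f, hf, rfl⟩ := hb
  refine ⟨fun | 0 => a | k + 1 => f k, ?_, rfl⟩
  rintro (_ | k)
  · exact hab
  · exact hf k

theorem mem_reachableFromZero_of_step {a b : V} (hab : (a, b) ∈ C)
    (ha : a ∈ reachableFromZero C) : b ∈ reachableFromZero C := by
  obtain ⟨f, ⟨hf, hfz⟩, rfl⟩ := ha
  refine ⟨fun | 0 => b | k + 1 => f k, ⟨?_, ?_⟩, rfl⟩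
  · rintro (_ | k)
    · exact hab
    · exact hf k
  · filter_upwards [(tendsto_sub_atTop_nat 1).eventually hfz, eventually_ge_atTop 1] with k hk hk1
    rcases k with _ | k
    · omega
    · simpa using hk

theorem exists_step_mem_plusSubmodule {v : V} (hv : v ∈ plusSubmodule C) :
    ∃ w ∈ plusSubmodule C, (v, w) ∈ C := by
  obtain ⟨f, ⟨hf, hfz⟩, rfl⟩ := hv
  exact ⟨f 1, ⟨fun n => f (n + 1), ⟨fun n => hf (n + 1),
    (tendsto_atTop_add_const_right _ 1 tendsto_id).eventually hfz⟩, rfl⟩, hf 0⟩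

theorem exists_step_to_mem_minusSubmodule {v : V} (hv : v ∈ minusSubmodule C) :
    ∃ u ∈ minusSubmodule C, (u, v) ∈ C := by
  obtain ⟨f, ⟨hf, hfz⟩, rfl⟩ := hv
  refine ⟨f (-1), ⟨fun n => f (n - 1), ⟨fun n => by simpa using hf (n - 1), ?_⟩, rfl⟩, hf (-1)⟩
  exact (tendsto_atBot_add_const_right _ (-1) tendsto_id).eventually hfz

theorem reachableFromZero_inf_forwardInfinite_le_minusSubmodule :
    reachableFromZero C ⊓ forwardInfinite C ≤ minusSubmodule C := by
  rintro v ⟨⟨g, ⟨hg, hgz⟩, rfl⟩, ⟨r, hr, hrg⟩⟩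
  obtain ⟨N, hN⟩ := eventually_atTop.1 hgz
  -- `g` read backwards on the negative integers, followed by `r` on the nonnegative ones
  refine ⟨fun | Int.ofNat k => r k | Int.negSucc k => g (k + 1), ⟨?_, ?_⟩, hrg⟩
  · rintro (k | _ | k)
    · exact hr k
    · show (g 1, r 0) ∈ C
      rw [show r 0 = g 0 from hrg]
      exact hg 0
    · exact hg (k + 1)
  · refine eventually_atBot.2 ⟨Int.negSucc N, ?_⟩
    rintro (k | k) hk <;> simp only [Int.ofNat_eq_natCast, Int.negSucc_eq] at hk
    · omega
    · exact hN (k + 1) (by omega)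

theorem flatSubmodule_le_forwardHull : flatSubmodule C ≤ forwardHull C :=
  sup_le_sup_left minusSubmodule_le_reachableFromZero _

theorem flatSubmodule_le_backwardHull : flatSubmodule C ≤ backwardHull C :=
  sup_le (le_sup_of_le_right plusSubmodule_le_forwardInfinite) le_sup_left

theorem mem_forwardHull_of_step {a b : V} (hab : (a, b) ∈ C) (ha : a ∈ forwardHull C) :
    b ∈ forwardHull C := by
  obtain ⟨p, hp, μ, hμ, rfl⟩ := Submodule.mem_sup.1 ha
  obtain ⟨w, hw, hpw⟩ := exists_step_mem_plusSubmodule hp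
  have hμw : (μ, b - w) ∈ C := by simpa using C.sub_mem hab hpw
  exact Submodule.mem_sup.2
    ⟨w, hw, b - w, mem_reachableFromZero_of_step hμw hμ, add_sub_cancel _ _⟩

theorem mem_backwardHull_of_step {a b : V} (hab : (a, b) ∈ C) (hb : b ∈ backwardHull C) :
    a ∈ backwardHull C := by
  obtain ⟨m, hm, r, hr, rfl⟩ := Submodule.mem_sup.1 hb
  obtain ⟨u, hu, hum⟩ := exists_step_to_mem_minusSubmodule hm
  have hur : (a - u, r) ∈ C := by simpa using C.sub_mem hab hum
  exact Submodule.mem_sup.2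
    ⟨u, hu, a - u, mem_forwardInfinite_of_step hur hr, add_sub_cancel _ _⟩

theorem forwardHull_inf_backwardHull_le_flatSubmodule :
    forwardHull C ⊓ backwardHull C ≤ flatSubmodule C := by
  rintro v ⟨hF, hB⟩
  obtain ⟨p, hp, μ, hμ, rfl⟩ := Submodule.mem_sup.1 hF
  obtain ⟨m, hm, r, hr, hmr⟩ := Submodule.mem_sup.1 hB
  have hμ' : μ ∈ forwardInfinite C := by
    rw [eq_sub_of_add_eq' hmr.symm]
    exact sub_mem (add_mem (minusSubmodule_le_forwardInfinite hm) hr)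
      (plusSubmodule_le_forwardInfinite hp)
  exact Submodule.mem_sup.2
    ⟨p, hp, μ, reachableFromZero_inf_forwardInfinite_le_minusSubmodule ⟨hμ, hμ'⟩, rfl⟩

theorem mem_inf_of_zigzag {S F B : Submodule K V} (hSF : S ≤ F) (hSB : S ≤ B)
    (hF : ∀ {a b}, (a, b) ∈ C → a ∈ F → b ∈ F) (hB : ∀ {a b}, (a, b) ∈ C → b ∈ B → a ∈ B)
    {n : ℕ} {c d : Fin (n + 1) → V} (hcd : ∀ i, (c i, d i) ∈ C) (h₀ : c 0 ∈ S)
    (hlast : d (Fin.last n) ∈ S) (hlink : ∀ i : Fin n, d i.castSucc - c i.succ ∈ S)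
    (i : Fin (n + 1)) : c i ∈ F ⊓ B := by
  refine ⟨Fin.induction (hSF h₀) (fun j hj => ?_) i,
    Fin.reverseInduction (hB (hcd _) (hSB hlast)) (fun j hj => ?_) i⟩
  · rw [← sub_sub_cancel (d j.castSucc) (c j.succ)]
    exact sub_mem (hF (hcd _) hj) (hSF (hlink j))
  · refine hB (hcd _) ?_
    rw [← sub_add_cancel (d j.castSucc) (c j.succ)]
    exact add_mem (hSB (hlink j)) hj

theorem mem_flatSubmodule_of_zigzag {n : ℕ} {c d : Fin (n + 1) → V} (hcd : ∀ i, (c i, d i) ∈ C)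
    (h₀ : c 0 ∈ flatSubmodule C) (hlast : d (Fin.last n) ∈ flatSubmodule C)
    (hlink : ∀ i : Fin n, d i.castSucc - c i.succ ∈ flatSubmodule C) (i : Fin (n + 1)) :
    c i ∈ flatSubmodule C :=
  forwardHull_inf_backwardHull_le_flatSubmodule <|
    mem_inf_of_zigzag flatSubmodule_le_forwardHull flatSubmodule_le_backwardHull
      mem_forwardHull_of_step mem_backwardHull_of_step hcd h₀ hlast hlink i

end Chains

section Preinjective
variable {n : ℕ}

def preinjectiveP (n : ℕ) : Matrix (Fin n) (Fin (n + 1)) K :=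
  Matrix.of fun j i => if (j : ℕ) + 1 = i then 1 else 0

def preinjectiveQ (n : ℕ) : Matrix (Fin n) (Fin (n + 1)) K :=
  Matrix.of fun j i => if (j : ℕ) = i then 1 else 0

theorem preinjectiveP_mulVec_single_zero : preinjectiveP n *ᵥ Pi.single 0 (1 : K) = 0 := by
  ext j
  simp [preinjectiveP]

theorem preinjectiveP_mulVec_single_succ (j : Fin n) :
    preinjectiveP n *ᵥ Pi.single j.succ (1 : K) = Pi.single j 1 := by
  ext j'
  simp [preinjectiveP, Pi.single_apply, Fin.ext_iff]

theorem preinjectiveQ_mulVec_single_castSucc (j : Fin n) :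
    preinjectiveQ n *ᵥ Pi.single j.castSucc (1 : K) = Pi.single j 1 := by
  ext j'
  simp [preinjectiveQ, Pi.single_apply, Fin.ext_iff]

theorem preinjectiveQ_mulVec_single_last :
    preinjectiveQ n *ᵥ Pi.single (Fin.last n) (1 : K) = 0 := by
  ext j
  simp [preinjectiveQ, j.isLt.ne]

end Preinjective

/-- Every morphism of Kronecker modules from the preinjective module `Iₙ`
(with `X`-basis `x₀,…,xₙ`, `Y`-basis `y₁,…,yₙ`, `p xᵢ = yᵢ`, `q xᵢ = yᵢ₊₁`) to the
quotient relation `(V/C^♭, C/C|_{C^♭})` is zero. The quotient relation is realized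
as the image `D` of `C` in `(V/C^♭) ⊕ (V/C^♭)`, whose relation module has `X`-space
`D ≅ C/C|_{C^♭}` and `Y`-space `V/C^♭`. -/
theorem no_map_In_to_quotient_by_flat
    {V : Type*} [AddCommGroup V] [Module K V] (C : Submodule K (V × V))
    (Sflat : Submodule K V) (hSf : (Sflat : Set V) = cflat C) (n : ℕ)
    (P Q : Matrix (Fin n) (Fin (n + 1)) K)
    (hP : ∀ j i, P j i = if (j : ℕ) + 1 = (i : ℕ) then 1 else 0)
    (hQ : ∀ j i, Q j i = if (j : ℕ) = (i : ℕ) then 1 else 0)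
    (θ : (Fin (n + 1) → K) →ₗ[K] ↥(C.map (Sflat.mkQ.prodMap Sflat.mkQ)))
    (φ : (Fin n → K) →ₗ[K] V ⧸ Sflat)
    (h1 : ∀ x, ((θ x : (V ⧸ Sflat) × (V ⧸ Sflat))).1 = φ (P.mulVecLin x))
    (h2 : ∀ x, ((θ x : (V ⧸ Sflat) × (V ⧸ Sflat))).2 = φ (Q.mulVecLin x)) :
    θ = 0 ∧ φ = 0 := by
  obtain rfl : Sflat = flatSubmodule C := SetLike.coe_injective (hSf.trans coe_flatSubmodule.symm)
  obtain rfl : P = preinjectiveP n := Matrix.ext hP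
  obtain rfl : Q = preinjectiveQ n := Matrix.ext hQ
  have hlift : ∀ i, ∃ cd ∈ C,
      (flatSubmodule C).mkQ cd.1 = φ (preinjectiveP n *ᵥ Pi.single i 1) ∧
      (flatSubmodule C).mkQ cd.2 = φ (preinjectiveQ n *ᵥ Pi.single i 1) := fun i => by
    obtain ⟨cd, hcd, hθ⟩ := Submodule.mem_map.1 (θ (Pi.single i 1)).2
    exact ⟨cd, hcd, (congrArg Prod.fst hθ).trans (h1 _), (congrArg Prod.snd hθ).trans (h2 _)⟩
  choose cd hcd hc hd using hlift
  have hmkQ : ∀ x, x ∈ flatSubmodule C ↔ (flatSubmodule C).mkQ x = 0 :=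
    fun _ => (Submodule.Quotient.mk_eq_zero _).symm
  have hflat := mem_flatSubmodule_of_zigzag (c := fun i => (cd i).1) (d := fun i => (cd i).2) hcd
    ((hmkQ _).2 (by rw [hc, preinjectiveP_mulVec_single_zero, map_zero]))
    ((hmkQ _).2 (by rw [hd, preinjectiveQ_mulVec_single_last, map_zero]))
    (fun j => (hmkQ _).2 (by rw [map_sub, hc, hd, preinjectiveP_mulVec_single_succ,
      preinjectiveQ_mulVec_single_castSucc, sub_self]))
  have hφ : φ = 0 := by
    ext j
    have := hflat j.succ
    rwa [hmkQ, hc, preinjectiveP_mulVec_single_succ] at this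
  refine ⟨LinearMap.ext fun x => Subtype.ext (Prod.ext ?_ ?_), hφ⟩ <;> simp [h1, h2, hφ]
end

section
/- Let (V,C) be a linear relation and let M be a finite-dimensional automorphic regular Kronecker module (p and q both isomorphisms). Then every morphism of Kronecker modules M → (V/C^♯, C/C|_{C^♯}) is zero. -/
/-!
Since `p` and `q` are surjective, every `y ∈ Y` sits on a bi-infinite `p`/`q` zigzag in `X`, so
`φ y` lies on a chain of the quotient relation `C/C|_{C^♯}`. Such a chain lifts to a chain of `C`:
a lift of one term differs from the correct one by an element of `C^♯`, and `C^♯ ⊆ C⁻¹C^♯`,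
`C^♯ ⊆ C C^♯` let the next term be corrected by an element of `C^♯` again. The lifted chain puts
any lift of `φ y` into `C^♯`, so `φ y = 0`; then `θ = 0` because `θ` is determined by `φ`.
-/

variable {K : Type*} [Field K]

theorem exists_nat_chain {α : Type*} (P : ℕ → α → Prop) (R : α → α → Prop)
    (succ : ∀ n a, P n a → ∃ b, P (n + 1) b ∧ R a b) {a₀ : α} (h₀ : P 0 a₀) :
    ∃ u : ℕ → α, u 0 = a₀ ∧ ∀ n, P n (u n) ∧ R (u n) (u (n + 1)) := by
  choose next hnextP hnextR using succ
  let v : ∀ n, {a // P n a} := fun n =>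
    Nat.rec ⟨a₀, h₀⟩ (fun n a => ⟨next n a a.2, hnextP n a a.2⟩) n
  exact ⟨fun n => (v n).1, rfl, fun n => ⟨(v n).2, hnextR n _ (v n).2⟩⟩

theorem exists_int_chain {α : Type*} (P : ℤ → α → Prop) (R : α → α → Prop)
    (succ : ∀ n a, P n a → ∃ b, P (n + 1) b ∧ R a b)
    (pred : ∀ n b, P (n + 1) b → ∃ a, P n a ∧ R a b) {a₀ : α} (h₀ : P 0 a₀) :
    ∃ f : ℤ → α, f 0 = a₀ ∧ ∀ n, P n (f n) ∧ R (f n) (f (n + 1)) := by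
  obtain ⟨u, hu₀, hu⟩ := exists_nat_chain (fun n => P n) R
    (fun n a ha => by simpa using succ n a ha) h₀
  obtain ⟨d, hd₀, hd⟩ := exists_nat_chain (fun n a => P (-n) a) (flip R)
    (fun n b hb => pred (-(n + 1 : ℕ)) b (by simpa using hb)) (by simpa using h₀)
  refine ⟨fun | .ofNat k => u k | .negSucc k => d (k + 1), hu₀, fun n => ?_⟩
  rcases n with k | _ | k
  · exact hu k
  · refine ⟨(hd 1).1, show R (d 1) (u 0) from ?_⟩
    rw [hu₀, ← hd₀]
    exact (hd 0).2
  · exact ⟨(hd (k + 2)).1, (hd (k + 1)).2⟩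

section Relation

variable {V : Type*} [AddCommGroup V] [Module K V] {C : Submodule K (V × V)}

theorem IsCChain.shift {h : ℤ → V} (hh : IsCChain C h) (k : ℤ) :
    IsCChain C (fun m => h (m + k)) := fun n => by
  simpa only [add_right_comm n 1 k] using hh (n + k)

theorem IsCChain.mem_csharp {h : ℤ → V} (hh : IsCChain C h) (k : ℤ) : h k ∈ csharp C :=
  ⟨fun m => h (m + k), hh.shift k, by simp⟩

theorem exists_succ_mem_csharp {v : V} (hv : v ∈ csharp C) :
    ∃ w ∈ csharp C, (v, w) ∈ C := by
  obtain ⟨h, hh, rfl⟩ := hv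
  exact ⟨h 1, hh.mem_csharp 1, hh 0⟩

theorem exists_pred_mem_csharp {v : V} (hv : v ∈ csharp C) :
    ∃ u ∈ csharp C, (u, v) ∈ C := by
  obtain ⟨h, hh, rfl⟩ := hv
  exact ⟨h (-1), hh.mem_csharp (-1), by simpa using hh (-1)⟩

variable {S : Submodule K V}

theorem exists_succ_of_sub_mem (hS : ∀ s ∈ S, ∃ t ∈ S, (s, t) ∈ C)
    {a b v : V} (hab : (a, b) ∈ C) (hv : v - a ∈ S) : ∃ w, (v, w) ∈ C ∧ w - b ∈ S := by
  obtain ⟨t, ht, hvt⟩ := hS _ hv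
  refine ⟨b + t, ?_, by simpa using ht⟩
  simpa using C.add_mem hab hvt

theorem exists_pred_of_sub_mem (hS : ∀ t ∈ S, ∃ s ∈ S, (s, t) ∈ C)
    {a b v : V} (hab : (a, b) ∈ C) (hv : v - b ∈ S) : ∃ u, (u, v) ∈ C ∧ u - a ∈ S := by
  obtain ⟨s, hs, hsv⟩ := hS _ hv
  refine ⟨a + s, ?_, by simpa using hs⟩
  simpa using C.add_mem hab hsv

theorem IsCChain.exists_lift (hsucc : ∀ s ∈ S, ∃ t ∈ S, (s, t) ∈ C)
    (hpred : ∀ t ∈ S, ∃ s ∈ S, (s, t) ∈ C) {f : ℤ → V ⧸ S}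
    (hf : IsCChain (C.map (S.mkQ.prodMap S.mkQ)) f) :
    ∃ g : ℤ → V, IsCChain C g ∧ S.mkQ (g 0) = f 0 := by
  have hstep : ∀ n, ∃ a b, (a, b) ∈ C ∧ S.mkQ a = f n ∧ S.mkQ b = f (n + 1) := fun n => by
    obtain ⟨⟨a, b⟩, hab, hfab⟩ := hf n
    exact ⟨a, b, hab, congrArg Prod.fst hfab, congrArg Prod.snd hfab⟩
  have succ : ∀ n v, S.mkQ v = f n → ∃ w, S.mkQ w = f (n + 1) ∧ (v, w) ∈ C := by
    intro n v hv
    obtain ⟨a, b, hab, ha, hb⟩ := hstep n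
    obtain ⟨w, hvw, hwb⟩ := exists_succ_of_sub_mem hsucc hab
      ((Submodule.Quotient.eq S).mp (hv.trans ha.symm))
    exact ⟨w, ((Submodule.Quotient.eq S).mpr hwb).trans hb, hvw⟩
  have pred : ∀ n v, S.mkQ v = f (n + 1) → ∃ u, S.mkQ u = f n ∧ (u, v) ∈ C := by
    intro n v hv
    obtain ⟨a, b, hab, ha, hb⟩ := hstep n
    obtain ⟨u, huv, hua⟩ := exists_pred_of_sub_mem hpred hab
      ((Submodule.Quotient.eq S).mp (hv.trans hb.symm))
    exact ⟨u, ((Submodule.Quotient.eq S).mpr hua).trans ha, huv⟩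
  obtain ⟨v₀, hv₀⟩ := S.mkQ_surjective (f 0)
  obtain ⟨g, -, hg⟩ := exists_int_chain _ _ succ pred hv₀
  exact ⟨g, fun n => (hg n).2, (hg 0).1⟩

theorem IsCChain.eq_zero_of_map_mkQ_csharp (hS : (S : Set V) = csharp C)
    {f : ℤ → V ⧸ S} (hf : IsCChain (C.map (S.mkQ.prodMap S.mkQ)) f) : f 0 = 0 := by
  have hsucc : ∀ s ∈ S, ∃ t ∈ S, (s, t) ∈ C := by
    simpa only [← SetLike.mem_coe, hS] using fun s => exists_succ_mem_csharp (C := C) (v := s)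
  have hpred : ∀ t ∈ S, ∃ s ∈ S, (s, t) ∈ C := by
    simpa only [← SetLike.mem_coe, hS] using fun t => exists_pred_mem_csharp (C := C) (v := t)
  obtain ⟨g, hg, hg₀⟩ := hf.exists_lift hsucc hpred
  rw [← hg₀, Submodule.mkQ_apply, Submodule.Quotient.mk_eq_zero, ← SetLike.mem_coe, hS]
  exact hg.mem_csharp 0

end Relation

theorem mem_csharp_of_surjective {W X Y : Type*} [AddCommGroup W] [Module K W]
    {D : Submodule K (W × W)} {p q : X → Y} (hp : Function.Surjective p)
    (hq : Function.Surjective q) {φ : Y → W} (hφ : ∀ x, (φ (p x), φ (q x)) ∈ D) (y : Y) :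
    φ y ∈ csharp D := by
  have succ (_ : ℤ) (y : Y) (_ : True) : ∃ y', True ∧ ∃ x, p x = y ∧ q x = y' :=
    let ⟨x, hx⟩ := hp y; ⟨q x, trivial, x, hx, rfl⟩
  have pred (_ : ℤ) (y' : Y) (_ : True) : ∃ y, True ∧ ∃ x, p x = y ∧ q x = y' :=
    let ⟨x, hx⟩ := hq y'; ⟨p x, trivial, x, rfl, hx⟩
  obtain ⟨f, rfl, hf⟩ := exists_int_chain _ _ succ pred (a₀ := y) trivial
  refine ⟨φ ∘ f, fun n => ?_, rfl⟩
  obtain ⟨x, hpx, hqx⟩ := (hf n).2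
  simpa only [Function.comp_apply, ← hpx, ← hqx] using hφ x

/-- The quotient relation `C/C|_{C^♯}` is realized as the image of `C` in `(V/C^♯) × (V/C^♯)`. -/
theorem no_map_automorphic_to_quotient_by_sharp_general
    {V : Type*} [AddCommGroup V] [Module K V] (C : Submodule K (V × V))
    (Ssharp : Submodule K V) (hSs : (Ssharp : Set V) = csharp C)
    {X Y : Type*} [AddCommGroup X] [Module K X] [AddCommGroup Y] [Module K Y]
    (pM qM : X →ₗ[K] Y)
    (hpM : Function.Bijective pM) (hqM : Function.Bijective qM)
    (θ : X →ₗ[K] ↥(C.map (Ssharp.mkQ.prodMap Ssharp.mkQ)))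
    (φ : Y →ₗ[K] V ⧸ Ssharp)
    (h1 : ∀ x, ((θ x : (V ⧸ Ssharp) × (V ⧸ Ssharp))).1 = φ (pM x))
    (h2 : ∀ x, ((θ x : (V ⧸ Ssharp) × (V ⧸ Ssharp))).2 = φ (qM x)) :
    θ = 0 ∧ φ = 0 := by
  have hφ : φ = 0 := by
    ext y
    have hmap (x : X) : (φ (pM x), φ (qM x)) ∈ C.map (Ssharp.mkQ.prodMap Ssharp.mkQ) := by
      simpa only [← h1, ← h2] using (θ x).2
    obtain ⟨f, hf, hf₀⟩ := mem_csharp_of_surjective hpM.2 hqM.2 hmap y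
    exact hf₀ ▸ hf.eq_zero_of_map_mkQ_csharp hSs
  refine ⟨LinearMap.ext fun x => Subtype.ext (Prod.ext ?_ ?_), hφ⟩
  · simp [h1, hφ]
  · simp [h2, hφ]

/-- Every morphism of Kronecker modules from a finite-dimensional automorphic
regular Kronecker module `M = (X, Y, pM, qM)` (both structure maps isomorphisms)
to the quotient relation `(V/C^♯, C/C|_{C^♯})` is zero. The quotient relation is
realized as the image `D` of `C` in `(V/C^♯) ⊕ (V/C^♯)`. -/
theorem no_map_automorphic_to_quotient_by_sharp
    {V : Type*} [AddCommGroup V] [Module K V] (C : Submodule K (V × V))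
    (Ssharp : Submodule K V) (hSs : (Ssharp : Set V) = csharp C)
    {X Y : Type*} [AddCommGroup X] [Module K X] [AddCommGroup Y] [Module K Y]
    [FiniteDimensional K X] [FiniteDimensional K Y]
    (pM qM : X →ₗ[K] Y)
    (hpM : Function.Bijective pM) (hqM : Function.Bijective qM)
    (θ : X →ₗ[K] ↥(C.map (Ssharp.mkQ.prodMap Ssharp.mkQ)))
    (φ : Y →ₗ[K] V ⧸ Ssharp)
    (h1 : ∀ x, ((θ x : (V ⧸ Ssharp) × (V ⧸ Ssharp))).1 = φ (pM x))
    (h2 : ∀ x, ((θ x : (V ⧸ Ssharp) × (V ⧸ Ssharp))).2 = φ (qM x)) :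
    θ = 0 ∧ φ = 0 :=
  no_map_automorphic_to_quotient_by_sharp_general C Ssharp hSs pM qM hpM hqM θ φ h1 h2
end

section
/- For any linear relation (V,C), both (C^♭, C|_{C^♭}) and (C^♯, C|_{C^♯}) are pure submodules of (V,C) when regarded as Kronecker modules; i.e., every morphism from a finite-dimensional Kronecker module to the quotient (V/U, C/C|_U) lifts to (V,C), for U = C^♭ and U = C^♯. -/
variable {K : Type*} [Field K]

/-!
A morphism from a finite-dimensional Kronecker module `(X, Y, p, q)` into a linear relation only
sees the relation `R = {(p x, q x)}` on `Y`, so it suffices to lift morphisms of linear relations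
`φ : (Y, R) → (V ⧸ S, C / C|_S)` to `(Y, R) → (V, C)`; we do this by induction on `dim Y`.
Both `S = C^♭` and `S = C^♯` satisfy `S ⊆ dom C|_S` and `S ⊆ ran C|_S`.

If `φ` has a kernel, pass to the quotient. If `dom R ≠ Y`, a lift on a hyperplane containing
`dom R` extends, because every element of `S` has a `C`-successor in `S`; dually if `ran R ≠ Y`.
If `dom R = ran R = Y`: for `S = C^♯` every `φ y` lies on a bi-infinite chain of `C / C|_S`, which
lifts to `C`, so `φ = 0`. For `S = C^♭`, a chain of `C / C|_S` starting at `0` lifts to a chain of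
`C` starting at `0`, which lies in `C₋`; hence `R` is the graph of an automorphism `ε` of `Y`, and
the lifting problem becomes `(x z, x (ε z) + d z) ∈ C` for a given `d : Y → C^♭`. Splitting
`d = d₊ + d₋` along `C^♭ = C₊ + C₋`, it is solved by telescoping sums along the eventually
vanishing chains through `d₊` and `d₋`.
-/

open Filter

theorem exists_seq_of_forall_exists {α : Type*} {P : ℕ → α → Prop} {r : α → α → Prop}
    (h : ∀ m a, P m a → ∃ b, P (m + 1) b ∧ r a b) {a₀ : α} (h₀ : P 0 a₀) :
    ∃ g : ℕ → α, g 0 = a₀ ∧ ∀ m, P m (g m) ∧ r (g m) (g (m + 1)) := by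
  choose F hFP hFr using h
  let G : ∀ m, {a // P m a} := fun m => Nat.rec ⟨a₀, h₀⟩ (fun m a => ⟨F m a a.2, hFP m a a.2⟩) m
  exact ⟨fun m => (G m).1, rfl, fun m => ⟨(G m).2, hFr m _ (G m).2⟩⟩

section LinearAlgebra

variable {Y Z M N : Type*} [AddCommGroup Y] [Module K Y] [AddCommGroup Z] [Module K Z]
  [AddCommGroup M] [Module K M] [AddCommGroup N] [Module K N]

theorem LinearMap.exists_lift_of_forall_mem_map (F : M →ₗ[K] N) (P : Submodule K M)
    (d : Z →ₗ[K] N) (hd : ∀ z, d z ∈ P.map F) :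
    ∃ κ : Z →ₗ[K] M, (∀ z, κ z ∈ P) ∧ F ∘ₗ κ = d := by
  obtain ⟨κ, hκ⟩ := Module.projective_lifting_property (F.submoduleMap P) (d.codRestrict _ hd)
    (F.submoduleMap_surjective P)
  exact ⟨P.subtype ∘ₗ κ, fun z => (κ z).2,
    LinearMap.ext fun z => congrArg Subtype.val (LinearMap.congr_fun hκ z)⟩

theorem LinearMap.ext_of_ker_dual {f : Module.Dual K Y} {y₁ : Y} (hy₁ : f y₁ = 1)
    {g h : Y →ₗ[K] M}
    (hker : g ∘ₗ (LinearMap.ker f).subtype = h ∘ₗ (LinearMap.ker f).subtype) (h₁ : g y₁ = h y₁) :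
    g = h := by
  ext y
  have hy : y - f y • y₁ ∈ LinearMap.ker f := by simp [hy₁]
  have := LinearMap.congr_fun hker ⟨_, hy⟩
  simp only [LinearMap.comp_apply, Submodule.subtype_apply, map_sub, map_smul, h₁] at this
  exact sub_left_inj.1 this

theorem LinearMap.ker_ne_top_of_apply_eq_one {f : Module.Dual K Y} {y : Y} (hy : f y = 1) :
    LinearMap.ker f ≠ ⊤ :=
  fun h => one_ne_zero (hy ▸ LinearMap.mem_ker.1 (h ▸ Submodule.mem_top : y ∈ LinearMap.ker f))

theorem Submodule.exists_dual_of_sup_eq_top {P Q : Submodule K Y} (hPQ : P ⊔ Q = ⊤)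
    (hP : P ≠ ⊤) : ∃ f : Module.Dual K Y, P ≤ LinearMap.ker f ∧ ∃ y ∈ Q, f y = 1 := by
  obtain ⟨f, hf0, hPf⟩ := Submodule.exists_le_ker_of_lt_top P hP.lt_top
  obtain ⟨y, hyQ, hy⟩ : ∃ y ∈ Q, f y ≠ 0 := by
    by_contra! hQ
    exact hf0 (LinearMap.ker_eq_top.1 (top_le_iff.1 (hPQ ▸ sup_le hPf fun y hy => hQ y hy)))
  exact ⟨f, hPf, (f y)⁻¹ • y, Q.smul_mem _ hyQ, by simp [hy]⟩

end LinearAlgebra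

namespace LinearRelation

section Chains

variable {V : Type*} [AddCommGroup V] [Module K V] {C : Submodule K (V × V)}

/-- For `l = atTop`, `atBot`, `⊥` this is `C₊`, `C₋`, `C^♯`. -/
def chainSubmodule (C : Submodule K (V × V)) (l : Filter ℤ) : Submodule K V where
  carrier := {v | ∃ f, IsCChain C f ∧ f 0 = v ∧ ∀ᶠ n in l, f n = 0}
  add_mem' := by
    rintro _ _ ⟨f, hf, rfl, hfl⟩ ⟨g, hg, rfl, hgl⟩
    exact ⟨f + g, fun n => C.add_mem (hf n) (hg n), rfl,
      (hfl.and hgl).mono fun n h => by simp [h.1, h.2]⟩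
  zero_mem' := ⟨0, fun _ => C.zero_mem, rfl, .of_forall fun _ => rfl⟩
  smul_mem' := by
    rintro c _ ⟨f, hf, rfl, hfl⟩
    exact ⟨c • f, fun n => C.smul_mem c (hf n), rfl, hfl.mono fun n h => by simp [h]⟩

theorem mem_chainSubmodule_of_isCChain {f : ℤ → V} (hf : IsCChain C f) {l : Filter ℤ}
    (hl : ∀ m : ℤ, Tendsto (· + m) l l) (hfl : ∀ᶠ n in l, f n = 0) (m : ℤ) :
    f m ∈ chainSubmodule C l :=
  ⟨fun n => f (n + m), fun n => by simpa only [add_right_comm] using hf (n + m), by simp,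
    (hl m).eventually hfl⟩

theorem coe_chainSubmodule_atTop_sup_atBot :
    ((chainSubmodule C atTop ⊔ chainSubmodule C atBot : Submodule K V) : Set V) = cflat C := by
  ext v
  simp [Submodule.mem_sup, cflat, cplus, cminus, chainSubmodule, eventually_atTop,
    eventually_atBot, eq_comm]

theorem coe_chainSubmodule_bot : (chainSubmodule C ⊥ : Set V) = csharp C := by
  ext v
  simp [csharp, chainSubmodule]

theorem eq_chainSubmodule_of_flat_or_sharp {S : Submodule K V}
    (hS : (S : Set V) = cflat C ∨ (S : Set V) = csharp C) :
    S = chainSubmodule C atTop ⊔ chainSubmodule C atBot ∨ S = chainSubmodule C ⊥ := by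
  rwa [← coe_chainSubmodule_atTop_sup_atBot, ← coe_chainSubmodule_bot, SetLike.coe_set_eq,
    SetLike.coe_set_eq] at hS

theorem chainSubmodule_le_map_fst {l : Filter ℤ} (hl : ∀ m : ℤ, Tendsto (· + m) l l) :
    chainSubmodule C l ≤
      (C ⊓ (chainSubmodule C l).prod (chainSubmodule C l)).map (LinearMap.fst K V V) := by
  rintro _ ⟨f, hf, rfl, hfl⟩
  exact ⟨(f 0, f 1), ⟨hf 0, mem_chainSubmodule_of_isCChain hf hl hfl 0,
    mem_chainSubmodule_of_isCChain hf hl hfl 1⟩, rfl⟩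

theorem chainSubmodule_le_map_snd {l : Filter ℤ} (hl : ∀ m : ℤ, Tendsto (· + m) l l) :
    chainSubmodule C l ≤
      (C ⊓ (chainSubmodule C l).prod (chainSubmodule C l)).map (LinearMap.snd K V V) := by
  rintro _ ⟨f, hf, rfl, hfl⟩
  exact ⟨(f (-1), f 0), ⟨hf (-1), mem_chainSubmodule_of_isCChain hf hl hfl (-1),
    mem_chainSubmodule_of_isCChain hf hl hfl 0⟩, rfl⟩

theorem sup_le_map_inf_prod {π : V × V →ₗ[K] V} {S₁ S₂ : Submodule K V}
    (h₁ : S₁ ≤ (C ⊓ S₁.prod S₁).map π) (h₂ : S₂ ≤ (C ⊓ S₂.prod S₂).map π) :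
    S₁ ⊔ S₂ ≤ (C ⊓ (S₁ ⊔ S₂).prod (S₁ ⊔ S₂)).map π := by
  have hmono : ∀ T ≤ S₁ ⊔ S₂, (C ⊓ T.prod T).map π ≤ (C ⊓ (S₁ ⊔ S₂).prod (S₁ ⊔ S₂)).map π :=
    fun T hT => Submodule.map_mono (inf_le_inf_left _ (Submodule.prod_mono hT hT))
  exact sup_le (h₁.trans (hmono _ le_sup_left)) (h₂.trans (hmono _ le_sup_right))

theorem le_map_fst_of_flat_or_sharp {S : Submodule K V}
    (hS : S = chainSubmodule C atTop ⊔ chainSubmodule C atBot ∨ S = chainSubmodule C ⊥) :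
    S ≤ (C ⊓ S.prod S).map (LinearMap.fst K V V) := by
  rcases hS with rfl | rfl
  · exact sup_le_map_inf_prod
      (chainSubmodule_le_map_fst fun m => tendsto_atTop_add_const_right _ m tendsto_id)
      (chainSubmodule_le_map_fst fun m => tendsto_atBot_add_const_right _ m tendsto_id)
  · exact chainSubmodule_le_map_fst fun _ => tendsto_bot

theorem le_map_snd_of_flat_or_sharp {S : Submodule K V}
    (hS : S = chainSubmodule C atTop ⊔ chainSubmodule C atBot ∨ S = chainSubmodule C ⊥) :
    S ≤ (C ⊓ S.prod S).map (LinearMap.snd K V V) := by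
  rcases hS with rfl | rfl
  · exact sup_le_map_inf_prod
      (chainSubmodule_le_map_snd fun m => tendsto_atTop_add_const_right _ m tendsto_id)
      (chainSubmodule_le_map_snd fun m => tendsto_atBot_add_const_right _ m tendsto_id)
  · exact chainSubmodule_le_map_snd fun _ => tendsto_bot

def splice (g h : ℕ → V) : ℤ → V
  | .ofNat n => g n
  | .negSucc n => h (n + 1)

theorem isCChain_splice {g h : ℕ → V} (hg : ∀ m, (g m, g (m + 1)) ∈ C)
    (hh : ∀ m, (h (m + 1), h m) ∈ C) (h0 : g 0 = h 0) : IsCChain C (splice g h)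
  | .ofNat m => hg m
  | .negSucc 0 => by simpa [splice, h0] using hh 0
  | .negSucc (m + 1) => hh (m + 1)

end Chains

section QuotientChains

variable {V : Type*} [AddCommGroup V] [Module K V] {C : Submodule K (V × V)} {S : Submodule K V}

/-- The paper's `C / C|_S`. -/
abbrev quotRel (C : Submodule K (V × V)) (S : Submodule K V) :
    Submodule K ((V ⧸ S) × (V ⧸ S)) :=
  C.map (S.mkQ.prodMap S.mkQ)

theorem exists_succ_of_mem_quotRel (hsucc : S ≤ (C ⊓ S.prod S).map (LinearMap.fst K V V))
    {v : V} {b : V ⧸ S} (h : (S.mkQ v, b) ∈ quotRel C S) : ∃ w, S.mkQ w = b ∧ (v, w) ∈ C := by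
  obtain ⟨c, hc, hcv⟩ := h
  have hc1 : S.mkQ c.1 = S.mkQ v := congrArg Prod.fst hcv
  have hc2 : S.mkQ c.2 = b := congrArg Prod.snd hcv
  obtain ⟨p, ⟨hpC, -, hp2⟩, hp1⟩ := hsucc ((Submodule.Quotient.eq S).1 hc1.symm)
  have hp1 : p.1 = v - c.1 := hp1
  refine ⟨c.2 + p.2, by simp [← hc2, (Submodule.Quotient.mk_eq_zero S).2 hp2], ?_⟩
  convert C.add_mem hc hpC using 1
  ext <;> simp [hp1]

theorem exists_pred_of_mem_quotRel (hpred : S ≤ (C ⊓ S.prod S).map (LinearMap.snd K V V))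
    {a : V ⧸ S} {w : V} (h : (a, S.mkQ w) ∈ quotRel C S) : ∃ v, S.mkQ v = a ∧ (v, w) ∈ C := by
  obtain ⟨c, hc, hcw⟩ := h
  have hc1 : S.mkQ c.1 = a := congrArg Prod.fst hcw
  have hc2 : S.mkQ c.2 = S.mkQ w := congrArg Prod.snd hcw
  obtain ⟨p, ⟨hpC, hp1, -⟩, hp2⟩ := hpred ((Submodule.Quotient.eq S).1 hc2.symm)
  have hp2 : p.2 = w - c.2 := hp2
  refine ⟨c.1 + p.1, by simp [← hc1, (Submodule.Quotient.mk_eq_zero S).2 hp1], ?_⟩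
  convert C.add_mem hc hpC using 1
  ext <;> simp [hp2]

theorem exists_forward_chain_lift (hsucc : S ≤ (C ⊓ S.prod S).map (LinearMap.fst K V V))
    {h : ℕ → V ⧸ S} (hh : ∀ m, (h m, h (m + 1)) ∈ quotRel C S) {v : V} (hv : S.mkQ v = h 0) :
    ∃ g : ℕ → V, g 0 = v ∧ ∀ m, S.mkQ (g m) = h m ∧ (g m, g (m + 1)) ∈ C :=
  exists_seq_of_forall_exists (P := fun m w => S.mkQ w = h m)
    (fun m _ hw => exists_succ_of_mem_quotRel hsucc (hw ▸ hh m)) hv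

theorem exists_backward_chain_lift (hpred : S ≤ (C ⊓ S.prod S).map (LinearMap.snd K V V))
    {h : ℕ → V ⧸ S} (hh : ∀ m, (h (m + 1), h m) ∈ quotRel C S) {v : V} (hv : S.mkQ v = h 0) :
    ∃ g : ℕ → V, g 0 = v ∧ ∀ m, S.mkQ (g m) = h m ∧ (g (m + 1), g m) ∈ C :=
  exists_seq_of_forall_exists (P := fun m w => S.mkQ w = h m) (r := fun a b => (b, a) ∈ C)
    (fun m _ hw => exists_pred_of_mem_quotRel hpred (hw ▸ hh m)) hv

theorem eq_zero_of_forward_chain_from_zero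
    (hsucc : S ≤ (C ⊓ S.prod S).map (LinearMap.fst K V V)) (hminus : chainSubmodule C atBot ≤ S)
    {h : ℕ → V ⧸ S} (hh : ∀ m, (h m, h (m + 1)) ∈ quotRel C S) (h0 : h 0 = 0) : h 1 = 0 := by
  obtain ⟨g, hg0, hg⟩ := exists_forward_chain_lift hsucc hh (v := 0) (by simp [h0])
  -- extended by zeros to the left, the lifted chain shows `g 1 ∈ C₋`
  have hchain : IsCChain C (splice g 0) :=
    isCChain_splice (fun m => (hg m).2) (fun _ => C.zero_mem) hg0
  have hzero : ∀ᶠ n in atBot, splice g 0 n = 0 := by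
    refine eventually_atBot.2 ⟨-1, fun n hn => ?_⟩
    cases n with
    | ofNat n => simp only [Int.ofNat_eq_natCast] at hn; omega
    | negSucc n => rfl
  have hg1 : g 1 ∈ S := hminus (mem_chainSubmodule_of_isCChain hchain
    (fun m => tendsto_atBot_add_const_right _ m tendsto_id) hzero 1)
  rw [← (hg 1).1]
  exact (Submodule.Quotient.mk_eq_zero S).2 hg1

theorem eq_zero_of_biinfinite_chain (hsucc : S ≤ (C ⊓ S.prod S).map (LinearMap.fst K V V))
    (hpred : S ≤ (C ⊓ S.prod S).map (LinearMap.snd K V V)) (hsharp : chainSubmodule C ⊥ ≤ S)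
    {h h' : ℕ → V ⧸ S} (hh : ∀ m, (h m, h (m + 1)) ∈ quotRel C S)
    (hh' : ∀ m, (h' (m + 1), h' m) ∈ quotRel C S) (h0 : h' 0 = h 0) : h 0 = 0 := by
  obtain ⟨v, hv⟩ := S.mkQ_surjective (h 0)
  obtain ⟨g, hg0, hg⟩ := exists_forward_chain_lift hsucc hh hv
  obtain ⟨g', hg'0, hg'⟩ := exists_backward_chain_lift hpred hh' (hv.trans h0.symm)
  have hchain : IsCChain C (splice g g') :=
    isCChain_splice (fun m => (hg m).2) (fun m => (hg' m).2) (hg0.trans hg'0.symm)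
  rw [← hv]
  exact (Submodule.Quotient.mk_eq_zero S).2 (hsharp ⟨_, hchain, hg0, by simp⟩)

end QuotientChains

section Automorphism

variable {V Z : Type*} [AddCommGroup V] [Module K V] [AddCommGroup Z] [Module K Z]
  {C : Submodule K (V × V)}

theorem exists_linear_chain [FiniteDimensional K Z] {l : Filter ℤ} {d : Z →ₗ[K] V}
    (hd : ∀ z, d z ∈ chainSubmodule C l) :
    ∃ f : ℤ → Z →ₗ[K] V, (∀ n z, (f n z, f (n + 1) z) ∈ C) ∧ f 0 = d ∧ ∀ᶠ n in l, f n = 0 := by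
  let b := Module.finBasis K Z
  choose g hg hg0 hgl using fun i => hd (b i)
  refine ⟨fun n => b.constr K fun i => g i n, fun n z => ?_, b.ext fun i => by simp [hg0],
    (eventually_all.2 hgl).mono fun n hn => b.ext fun i => by simp [hn]⟩
  refine (Submodule.map_span_le ((b.constr K fun i => g i n).prod (b.constr K fun i => g i (n + 1)))
    _ C).2 ?_ (Submodule.mem_map_of_mem (b.mem_span z))
  rintro _ ⟨i, rfl⟩
  simpa using hg i n

theorem exists_telescoping_sum (ε : Z ≃ₗ[K] Z) {P : Submodule K V} {f : ℤ → Z →ₗ[K] V}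
    (hf : ∀ n z, (f n z, f (n + 1) z) ∈ C) (hfP : ∀ n z, f n z ∈ P) (a : ℤ) (N : ℕ) :
    ∃ x : Z →ₗ[K] V, (∀ z, x z ∈ P) ∧
      ∀ z, (x z, x (ε z) + f (a + N) ((ε ^ (-(a + N))) z) - f a ((ε ^ (-a)) z)) ∈ C := by
  set x := ∑ t ∈ Finset.range N, f (a + t) ∘ₗ (ε ^ (-(a + t + 1))).toLinearMap
  have hx : ∀ w, x w = ∑ t ∈ Finset.range N, f (a + t) ((ε ^ (-(a + t + 1))) w) := fun w => by
    simp only [x, LinearMap.sum_apply, LinearMap.comp_apply, LinearEquiv.coe_coe]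
  refine ⟨x, fun z => hx z ▸ Submodule.sum_mem _ fun t _ => hfP _ _, fun z => ?_⟩
  set u : ℕ → V := fun t => f (a + t) ((ε ^ (-(a + t))) z)
  have hxε : x (ε z) = ∑ t ∈ Finset.range N, u t := by
    rw [hx]
    refine Finset.sum_congr rfl fun t _ => ?_
    rw [← LinearEquiv.mul_apply, ← zpow_add_one, show -(a + t + 1) + 1 = -(a + t) by ring]
  have hsum : ∑ t ∈ Finset.range N, (f (a + t) ((ε ^ (-(a + t + 1))) z), u (t + 1)) ∈ C :=
    Submodule.sum_mem _ fun t _ => by simpa [u, add_assoc] using hf (a + t) ((ε ^ (-(a + t + 1))) z)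
  have hu0 : u 0 = f a ((ε ^ (-a)) z) := by simp [u]
  rw [show f (a + N) ((ε ^ (-(a + N))) z) = u N from rfl, ← hu0, hxε, hx]
  convert hsum using 1
  ext
  · simp only [Prod.fst_sum]
  · rw [Prod.snd_sum, add_sub_assoc, ← Finset.sum_range_sub u N, ← Finset.sum_add_distrib]
    simp

theorem exists_solution_atTop [FiniteDimensional K Z] (ε : Z ≃ₗ[K] Z) {d : Z →ₗ[K] V}
    (hd : ∀ z, d z ∈ chainSubmodule C atTop) :
    ∃ x : Z →ₗ[K] V, (∀ z, x z ∈ chainSubmodule C atTop) ∧ ∀ z, (x z, x (ε z) + d z) ∈ C := by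
  obtain ⟨f, hf, rfl, hfl⟩ := exists_linear_chain hd
  obtain ⟨N, hN⟩ := eventually_atTop.1 hfl
  obtain ⟨x, hxP, hx⟩ := exists_telescoping_sum ε hf (fun n z => mem_chainSubmodule_of_isCChain
    (fun m => hf m z) (fun m => tendsto_atTop_add_const_right _ m tendsto_id)
    (hfl.mono fun m hm => by simp [hm]) n) 0 N.toNat
  have hfN : f (0 + N.toNat) = 0 := hN _ (by omega)
  refine ⟨-x, fun z => neg_mem (hxP z), fun z => ?_⟩
  have hxz := hx z
  rw [hfN, LinearMap.zero_apply, add_zero, neg_zero, zpow_zero] at hxz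
  convert C.neg_mem hxz using 1
  ext
  · simp
  · simp only [LinearMap.neg_apply, Prod.snd_neg, neg_sub, LinearEquiv.coe_one, id]
    abel

theorem exists_solution_atBot [FiniteDimensional K Z] (ε : Z ≃ₗ[K] Z) {d : Z →ₗ[K] V}
    (hd : ∀ z, d z ∈ chainSubmodule C atBot) :
    ∃ x : Z →ₗ[K] V, (∀ z, x z ∈ chainSubmodule C atBot) ∧ ∀ z, (x z, x (ε z) + d z) ∈ C := by
  obtain ⟨f, hf, rfl, hfl⟩ := exists_linear_chain hd
  obtain ⟨N, hN⟩ := eventually_atBot.1 hfl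
  obtain ⟨x, hxP, hx⟩ := exists_telescoping_sum ε hf (fun n z => mem_chainSubmodule_of_isCChain
    (fun m => hf m z) (fun m => tendsto_atBot_add_const_right _ m tendsto_id)
    (hfl.mono fun m hm => by simp [hm]) n) (min N 0) (-min N 0).toNat
  refine ⟨x, hxP, fun z => ?_⟩
  have h0 : min N 0 + ((-min N 0).toNat : ℤ) = 0 := by omega
  simpa [h0, hN _ (min_le_left N 0)] using hx z

theorem exists_solution_of_flat [FiniteDimensional K Z] (ε : Z ≃ₗ[K] Z) {d : Z →ₗ[K] V}
    (hd : ∀ z, d z ∈ chainSubmodule C atTop ⊔ chainSubmodule C atBot) :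
    ∃ x : Z →ₗ[K] V, (∀ z, x z ∈ chainSubmodule C atTop ⊔ chainSubmodule C atBot) ∧
      ∀ z, (x z, x (ε z) + d z) ∈ C := by
  obtain ⟨δ, hδ, rfl⟩ := LinearMap.exists_lift_of_forall_mem_map (LinearMap.id.coprod LinearMap.id)
    ((chainSubmodule C atTop).prod (chainSubmodule C atBot)) d
    (by simpa [LinearMap.map_coprod_prod] using hd)
  obtain ⟨x₁, hx₁, hx₁C⟩ :=
    exists_solution_atTop ε (d := LinearMap.fst K V V ∘ₗ δ) fun z => (hδ z).1
  obtain ⟨x₂, hx₂, hx₂C⟩ :=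
    exists_solution_atBot ε (d := LinearMap.snd K V V ∘ₗ δ) fun z => (hδ z).2
  refine ⟨x₁ + x₂, fun z => Submodule.add_mem_sup (hx₁ z) (hx₂ z), fun z => ?_⟩
  convert C.add_mem (hx₁C z) (hx₂C z) using 1
  ext
  · simp
  · simp only [LinearMap.add_apply, LinearMap.coprod_apply, LinearMap.comp_apply,
      LinearMap.fst_apply, LinearMap.snd_apply, LinearMap.id_apply, Prod.snd_add]
    abel

theorem exists_lift_of_linearEquiv {S : Submodule K V}
    (hS : S = chainSubmodule C atTop ⊔ chainSubmodule C atBot) [FiniteDimensional K Z]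
    (ε : Z ≃ₗ[K] Z) (ψ : Z →ₗ[K] V ⧸ S) (hψ : ∀ z, (ψ z, ψ (ε z)) ∈ quotRel C S) :
    ∃ ψ' : Z →ₗ[K] V, S.mkQ ∘ₗ ψ' = ψ ∧ ∀ z, (ψ' z, ψ' (ε z)) ∈ C := by
  obtain ⟨κ, hκC, hκ⟩ :=
    LinearMap.exists_lift_of_forall_mem_map (S.mkQ.prodMap S.mkQ) C (ψ.prod (ψ ∘ₗ ε)) hψ
  have hκ₁ : ∀ z, S.mkQ (κ z).1 = ψ z := fun z => congrArg Prod.fst (LinearMap.congr_fun hκ z)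
  have hκ₂ : ∀ z, S.mkQ (κ z).2 = ψ (ε z) := fun z => congrArg Prod.snd (LinearMap.congr_fun hκ z)
  -- `ψ' := κ.1 - x` with `x : Z → S` works iff `(x z, x (ε z) + d z) ∈ C`
  set d := LinearMap.snd K V V ∘ₗ κ - LinearMap.fst K V V ∘ₗ κ ∘ₗ ε.toLinearMap
  have hd : ∀ z, d z ∈ S := fun z => (Submodule.Quotient.eq S).1 ((hκ₂ z).trans (hκ₁ (ε z)).symm)
  subst hS
  obtain ⟨x, hxS, hx⟩ := exists_solution_of_flat ε hd
  refine ⟨LinearMap.fst K V V ∘ₗ κ - x, ?_, fun z => ?_⟩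
  · ext z
    simp [← hκ₁ z, (Submodule.Quotient.mk_eq_zero _).2 (hxS z)]
  · convert C.sub_mem (hκC z) (hx z) using 1
    ext
    · simp
    · simp [d]
      abel

end Automorphism

section Lifting

variable {V Y : Type*} [AddCommGroup V] [Module K V] [AddCommGroup Y] [Module K Y]
  {C : Submodule K (V × V)} {S : Submodule K V}

/-- Here and below, `R ≤ T.comap (φ.prodMap φ)` says that `φ` is a morphism of linear relations
`(Y, R) → (W, T)`. -/
def LiftingProperty (C : Submodule K (V × V)) (S : Submodule K V) (Y : Type*) [AddCommGroup Y]
    [Module K Y] : Prop :=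
  ∀ (R : Submodule K (Y × Y)) (φ : Y →ₗ[K] V ⧸ S), R ≤ (quotRel C S).comap (φ.prodMap φ) →
    ∃ φ' : Y →ₗ[K] V, S.mkQ ∘ₗ φ' = φ ∧ R ≤ C.comap (φ'.prodMap φ')

variable {R : Submodule K (Y × Y)} {φ : Y →ₗ[K] V ⧸ S}

theorem map_mem_of_le_comap {W : Type*} [AddCommGroup W] [Module K W] {T : Submodule K (W × W)}
    {g : Y →ₗ[K] W} (hg : R ≤ T.comap (g.prodMap g)) {a b : Y} (h : (a, b) ∈ R) :
    (g a, g b) ∈ T :=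
  hg h

theorem exists_lift_of_quotient {W : Submodule K Y} (hW : W ≤ LinearMap.ker φ)
    (hlift : LiftingProperty C S (Y ⧸ W)) (hφ : R ≤ (quotRel C S).comap (φ.prodMap φ)) :
    ∃ φ' : Y →ₗ[K] V, S.mkQ ∘ₗ φ' = φ ∧ R ≤ C.comap (φ'.prodMap φ') := by
  obtain ⟨ψ, hψ, hψR⟩ := hlift (R.map (W.mkQ.prodMap W.mkQ)) (W.liftQ φ hW)
    (Submodule.map_le_iff_le_comap.2 fun r hr => hφ hr)
  exact ⟨ψ ∘ₗ W.mkQ, by rw [← LinearMap.comp_assoc, hψ, W.liftQ_mkQ],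
    fun r hr => hψR (Submodule.mem_map_of_mem hr)⟩

theorem exists_lift_of_ker {f : Module.Dual K Y} {y₁ : Y} (hy₁ : f y₁ = 1)
    {φ₁ : LinearMap.ker f →ₗ[K] V} (hφ₁ : S.mkQ ∘ₗ φ₁ = φ ∘ₗ (LinearMap.ker f).subtype)
    (hφ₁R : R.comap ((LinearMap.ker f).subtype.prodMap (LinearMap.ker f).subtype) ≤
      C.comap (φ₁.prodMap φ₁))
    {ℓ : V} (hℓ : S.mkQ ℓ = φ y₁) {r₀ : Y × Y} (hr₀R : r₀ ∈ R)
    (hr₀ : ∀ g : Y →ₗ[K] V, g ∘ₗ (LinearMap.ker f).subtype = φ₁ → g y₁ = ℓ → (g r₀.1, g r₀.2) ∈ C)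
    (hR : ∀ r ∈ R, ∃ c : K, f (r - c • r₀).1 = 0 ∧ f (r - c • r₀).2 = 0) :
    ∃ φ' : Y →ₗ[K] V, S.mkQ ∘ₗ φ' = φ ∧ R ≤ C.comap (φ'.prodMap φ') := by
  obtain ⟨g, hg⟩ := LinearMap.exists_extend φ₁
  set φ' := g + f.smulRight (ℓ - g y₁)
  have hφ'₁ : φ' ∘ₗ (LinearMap.ker f).subtype = φ₁ := by
    rw [← hg]
    ext ⟨y, hy⟩
    simp [φ', LinearMap.mem_ker.1 hy]
  have hφ'y₁ : φ' y₁ = ℓ := by simp [φ', hy₁]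
  refine ⟨φ', LinearMap.ext_of_ker_dual hy₁ ?_ (by simpa [hφ'y₁] using hℓ), fun r hr => ?_⟩
  · rw [LinearMap.comp_assoc, hφ'₁, hφ₁]
  obtain ⟨c, hc₁, hc₂⟩ := hR r hr
  have hker : (φ' (r - c • r₀).1, φ' (r - c • r₀).2) ∈ C := by
    have := hφ₁R (show ((⟨_, hc₁⟩, ⟨_, hc₂⟩) : LinearMap.ker f × LinearMap.ker f) ∈ _ from
      R.sub_mem hr (R.smul_mem c hr₀R))
    rwa [← hφ'₁] at this
  show (φ' r.1, φ' r.2) ∈ C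
  convert C.add_mem hker (C.smul_mem c (hr₀ φ' hφ'₁ hφ'y₁)) using 1
  ext <;> simp

theorem exists_lift_of_sup_ne_top
    (hsup : R.map (LinearMap.fst K Y Y) ⊔ R.map (LinearMap.snd K Y Y) ≠ ⊤)
    (hφ : R ≤ (quotRel C S).comap (φ.prodMap φ))
    (ih : ∀ Y' : Submodule K Y, Y' ≠ ⊤ → LiftingProperty C S Y') :
    ∃ φ' : Y →ₗ[K] V, S.mkQ ∘ₗ φ' = φ ∧ R ≤ C.comap (φ'.prodMap φ') := by
  obtain ⟨f, hf, y₁, -, hy₁⟩ := Submodule.exists_dual_of_sup_eq_top (sup_top_eq _) hsup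
  obtain ⟨φ₁, hφ₁, hφ₁R⟩ := ih _ (LinearMap.ker_ne_top_of_apply_eq_one hy₁)
    (R.comap ((LinearMap.ker f).subtype.prodMap (LinearMap.ker f).subtype))
    (φ ∘ₗ (LinearMap.ker f).subtype) fun r hr => hφ hr
  obtain ⟨ℓ, hℓ⟩ := S.mkQ_surjective (φ y₁)
  refine exists_lift_of_ker hy₁ hφ₁ hφ₁R hℓ R.zero_mem
    (fun _ _ _ => by simp only [Prod.fst_zero, Prod.snd_zero, map_zero]; exact C.zero_mem)
    fun r hr => ⟨0, ?_, ?_⟩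
  · simpa using hf (Submodule.mem_sup_left (Submodule.mem_map_of_mem hr))
  · simpa using hf (Submodule.mem_sup_right (Submodule.mem_map_of_mem hr))

theorem exists_lift_of_map_fst_ne_top (hsucc : S ≤ (C ⊓ S.prod S).map (LinearMap.fst K V V))
    (hsup : R.map (LinearMap.fst K Y Y) ⊔ R.map (LinearMap.snd K Y Y) = ⊤)
    (hdom : R.map (LinearMap.fst K Y Y) ≠ ⊤) (hφ : R ≤ (quotRel C S).comap (φ.prodMap φ))
    (ih : ∀ Y' : Submodule K Y, Y' ≠ ⊤ → LiftingProperty C S Y') :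
    ∃ φ' : Y →ₗ[K] V, S.mkQ ∘ₗ φ' = φ ∧ R ≤ C.comap (φ'.prodMap φ') := by
  obtain ⟨f, hf, _, ⟨r₀, hr₀R, rfl⟩, hr₀⟩ := Submodule.exists_dual_of_sup_eq_top hsup hdom
  replace hr₀ : f r₀.2 = 1 := hr₀
  have hf₁ : ∀ r ∈ R, f r.1 = 0 := fun r hr => hf (Submodule.mem_map_of_mem hr)
  obtain ⟨φ₁, hφ₁, hφ₁R⟩ := ih _ (LinearMap.ker_ne_top_of_apply_eq_one hr₀)
    (R.comap ((LinearMap.ker f).subtype.prodMap (LinearMap.ker f).subtype))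
    (φ ∘ₗ (LinearMap.ker f).subtype) fun r hr => hφ hr
  have hφ₁r₀ : S.mkQ (φ₁ ⟨r₀.1, hf₁ r₀ hr₀R⟩) = φ r₀.1 := LinearMap.congr_fun hφ₁ _
  obtain ⟨ℓ, hℓ, hℓC⟩ := exists_succ_of_mem_quotRel hsucc (b := φ r₀.2)
    (by rw [hφ₁r₀]; exact hφ hr₀R)
  refine exists_lift_of_ker hr₀ hφ₁ hφ₁R hℓ hr₀R (fun g hg hgy => ?_)
    fun r hr => ⟨f r.2, by simp [hf₁ r hr, hf₁ r₀ hr₀R], by simp [hr₀]⟩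
  rw [← hg] at hℓC
  simpa [hgy] using hℓC

theorem exists_lift_of_map_snd_ne_top (hpred : S ≤ (C ⊓ S.prod S).map (LinearMap.snd K V V))
    (hsup : R.map (LinearMap.fst K Y Y) ⊔ R.map (LinearMap.snd K Y Y) = ⊤)
    (hran : R.map (LinearMap.snd K Y Y) ≠ ⊤) (hφ : R ≤ (quotRel C S).comap (φ.prodMap φ))
    (ih : ∀ Y' : Submodule K Y, Y' ≠ ⊤ → LiftingProperty C S Y') :
    ∃ φ' : Y →ₗ[K] V, S.mkQ ∘ₗ φ' = φ ∧ R ≤ C.comap (φ'.prodMap φ') := by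
  obtain ⟨f, hf, _, ⟨r₀, hr₀R, rfl⟩, hr₀⟩ :=
    Submodule.exists_dual_of_sup_eq_top (by rwa [sup_comm] at hsup) hran
  replace hr₀ : f r₀.1 = 1 := hr₀
  have hf₂ : ∀ r ∈ R, f r.2 = 0 := fun r hr => hf (Submodule.mem_map_of_mem hr)
  obtain ⟨φ₁, hφ₁, hφ₁R⟩ := ih _ (LinearMap.ker_ne_top_of_apply_eq_one hr₀)
    (R.comap ((LinearMap.ker f).subtype.prodMap (LinearMap.ker f).subtype))
    (φ ∘ₗ (LinearMap.ker f).subtype) fun r hr => hφ hr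
  have hφ₁r₀ : S.mkQ (φ₁ ⟨r₀.2, hf₂ r₀ hr₀R⟩) = φ r₀.2 := LinearMap.congr_fun hφ₁ _
  obtain ⟨ℓ, hℓ, hℓC⟩ := exists_pred_of_mem_quotRel hpred (a := φ r₀.1)
    (by rw [hφ₁r₀]; exact hφ hr₀R)
  refine exists_lift_of_ker hr₀ hφ₁ hφ₁R hℓ hr₀R (fun g hg hgy => ?_)
    fun r hr => ⟨f r.1, by simp [hr₀], by simp [hf₂ r hr, hf₂ r₀ hr₀R]⟩
  rw [← hg] at hℓC
  simpa [hgy] using hℓC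

theorem exists_forall_mem_of_map_fst_eq_top (hdom : R.map (LinearMap.fst K Y Y) = ⊤) :
    ∃ σ : Y →ₗ[K] Y, ∀ y, (y, σ y) ∈ R := by
  obtain ⟨s, hsR, hs⟩ :=
    LinearMap.exists_lift_of_forall_mem_map (LinearMap.fst K Y Y) R LinearMap.id (by simp [hdom])
  refine ⟨LinearMap.snd K Y Y ∘ₗ s, fun y => ?_⟩
  have hsy : s y = (y, (s y).2) := Prod.ext (LinearMap.congr_fun hs y) rfl
  exact hsy ▸ hsR y

theorem exists_forall_mem_of_map_snd_eq_top (hran : R.map (LinearMap.snd K Y Y) = ⊤) :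
    ∃ τ : Y →ₗ[K] Y, ∀ y, (τ y, y) ∈ R := by
  obtain ⟨s, hsR, hs⟩ :=
    LinearMap.exists_lift_of_forall_mem_map (LinearMap.snd K Y Y) R LinearMap.id (by simp [hran])
  refine ⟨LinearMap.fst K Y Y ∘ₗ s, fun y => ?_⟩
  have hsy : s y = ((s y).1, y) := Prod.ext rfl (LinearMap.congr_fun hs y)
  exact hsy ▸ hsR y

theorem eq_zero_of_sharp (hsucc : S ≤ (C ⊓ S.prod S).map (LinearMap.fst K V V))
    (hpred : S ≤ (C ⊓ S.prod S).map (LinearMap.snd K V V)) (hsharp : chainSubmodule C ⊥ ≤ S)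
    (hφ : R ≤ (quotRel C S).comap (φ.prodMap φ)) (hdom : R.map (LinearMap.fst K Y Y) = ⊤)
    (hran : R.map (LinearMap.snd K Y Y) = ⊤) : φ = 0 := by
  obtain ⟨σ, hσ⟩ := exists_forall_mem_of_map_fst_eq_top hdom
  obtain ⟨τ, hτ⟩ := exists_forall_mem_of_map_snd_eq_top hran
  ext y
  refine eq_zero_of_biinfinite_chain hsucc hpred hsharp (h := fun m => φ (σ^[m] y))
    (h' := fun m => φ (τ^[m] y)) (fun m => ?_) (fun m => ?_) rfl
  · simpa only [Function.iterate_succ_apply'] using map_mem_of_le_comap hφ (hσ (σ^[m] y))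
  · simpa only [Function.iterate_succ_apply'] using map_mem_of_le_comap hφ (hτ (τ^[m] y))

theorem exists_lift_of_flat (hS : S = chainSubmodule C atTop ⊔ chainSubmodule C atBot)
    (hsucc : S ≤ (C ⊓ S.prod S).map (LinearMap.fst K V V)) [FiniteDimensional K Y]
    (hφ : R ≤ (quotRel C S).comap (φ.prodMap φ)) (hinj : LinearMap.ker φ = ⊥)
    (hdom : R.map (LinearMap.fst K Y Y) = ⊤) (hran : R.map (LinearMap.snd K Y Y) = ⊤) :
    ∃ φ' : Y →ₗ[K] V, S.mkQ ∘ₗ φ' = φ ∧ R ≤ C.comap (φ'.prodMap φ') := by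
  obtain ⟨σ, hσ⟩ := exists_forall_mem_of_map_fst_eq_top hdom
  have hR0 : ∀ y, (0, y) ∈ R → y = 0 := fun y hy => LinearMap.ker_eq_bot'.1 hinj y <|
    eq_zero_of_forward_chain_from_zero hsucc (hS ▸ le_sup_right)
      (h := fun | 0 => 0 | m + 1 => φ (σ^[m] y))
      (fun | 0 => by simpa using map_mem_of_le_comap hφ hy
           | m + 1 => by
              simpa only [Function.iterate_succ_apply'] using map_mem_of_le_comap hφ (hσ (σ^[m] y)))
      rfl
  have hgraph : ∀ r ∈ R, r.2 = σ r.1 := fun r hr =>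
    sub_eq_zero.1 (hR0 _ (by convert R.sub_mem hr (hσ r.1) using 1; ext <;> simp))
  have hsurj : Function.Surjective σ := fun y => by
    obtain ⟨r, hr, rfl⟩ : y ∈ R.map (LinearMap.snd K Y Y) := hran ▸ Submodule.mem_top
    exact ⟨r.1, (hgraph r hr).symm⟩
  let ε := LinearEquiv.ofBijective σ ⟨LinearMap.injective_iff_surjective.2 hsurj, hsurj⟩
  obtain ⟨φ', hφ', hφ'C⟩ := exists_lift_of_linearEquiv hS ε φ fun y => hφ (hσ y)
  refine ⟨φ', hφ', fun r hr => ?_⟩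
  have hεr : ε r.1 = r.2 := (hgraph r hr).symm
  show (φ' r.1, φ' r.2) ∈ C
  exact hεr ▸ hφ'C r.1

theorem liftingProperty
    (hS : S = chainSubmodule C atTop ⊔ chainSubmodule C atBot ∨ S = chainSubmodule C ⊥)
    (Y : Type*) [AddCommGroup Y] [Module K Y] [FiniteDimensional K Y] :
    LiftingProperty C S Y := by
  have hsucc := le_map_fst_of_flat_or_sharp hS
  have hpred := le_map_snd_of_flat_or_sharp hS
  induction hn : Module.finrank K Y using Nat.strong_induction_on generalizing Y with
  | _ n ih =>
  intro R φ hφ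
  have ih_sub : ∀ Y' : Submodule K Y, Y' ≠ ⊤ → LiftingProperty C S Y' :=
    fun Y' hY' => ih _ (hn ▸ Submodule.finrank_lt hY') Y' rfl
  by_cases hker : LinearMap.ker φ = ⊥
  swap
  · have hlt : Module.finrank K (Y ⧸ LinearMap.ker φ) < n := by
      have := (LinearMap.ker φ).finrank_quotient_add_finrank
      have := Submodule.finrank_eq_zero.not.2 hker
      omega
    exact exists_lift_of_quotient le_rfl (ih _ hlt _ rfl) hφ
  by_cases hsup : R.map (LinearMap.fst K Y Y) ⊔ R.map (LinearMap.snd K Y Y) = ⊤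
  swap
  · exact exists_lift_of_sup_ne_top hsup hφ ih_sub
  by_cases hdom : R.map (LinearMap.fst K Y Y) = ⊤
  swap
  · exact exists_lift_of_map_fst_ne_top hsucc hsup hdom hφ ih_sub
  by_cases hran : R.map (LinearMap.snd K Y Y) = ⊤
  swap
  · exact exists_lift_of_map_snd_ne_top hpred hsup hran hφ ih_sub
  rcases hS with hflat | hsharp
  · exact exists_lift_of_flat hflat hsucc hφ hker hdom hran
  · refine ⟨0, ?_, fun r _ => by simp⟩
    rw [eq_zero_of_sharp hsucc hpred hsharp.ge hφ hdom hran, LinearMap.comp_zero]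

end Lifting

end LinearRelation

theorem flat_and_sharp_are_pure_general
    {V : Type*} [AddCommGroup V] [Module K V] (C : Submodule K (V × V))
    (S : Submodule K V) (hS : (S : Set V) = cflat C ∨ (S : Set V) = csharp C)
    {X Y : Type*} [AddCommGroup X] [Module K X] [AddCommGroup Y] [Module K Y]
    [FiniteDimensional K Y]
    (pM qM : X →ₗ[K] Y)
    (θ : X →ₗ[K] ↥(C.map (S.mkQ.prodMap S.mkQ))) (φ : Y →ₗ[K] V ⧸ S)
    (h1 : ∀ x, ((θ x : (V ⧸ S) × (V ⧸ S))).1 = φ (pM x))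
    (h2 : ∀ x, ((θ x : (V ⧸ S) × (V ⧸ S))).2 = φ (qM x)) :
    ∃ (θ' : X →ₗ[K] ↥C) (φ' : Y →ₗ[K] V),
      (∀ x, ((θ' x : V × V)).1 = φ' (pM x)) ∧
      (∀ x, ((θ' x : V × V)).2 = φ' (qM x)) ∧
      (∀ y, S.mkQ (φ' y) = φ y) ∧
      (∀ x, (S.mkQ.prodMap S.mkQ) (θ' x : V × V) = (θ x : (V ⧸ S) × (V ⧸ S))) := by
  have hθ : ∀ x, (θ x : (V ⧸ S) × (V ⧸ S)) = (φ (pM x), φ (qM x)) :=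
    fun x => Prod.ext (h1 x) (h2 x)
  have hR : LinearMap.range (pM.prod qM) ≤ (LinearRelation.quotRel C S).comap (φ.prodMap φ) := by
    rintro _ ⟨x, rfl⟩
    have hx := (θ x).2
    rwa [hθ] at hx
  obtain ⟨φ', hφ', hC⟩ := LinearRelation.liftingProperty
    (LinearRelation.eq_chainSubmodule_of_flat_or_sharp hS) Y _ φ hR
  have hφ'y : ∀ y, S.mkQ (φ' y) = φ y := LinearMap.congr_fun hφ'
  refine ⟨LinearMap.codRestrict C ((φ' ∘ₗ pM).prod (φ' ∘ₗ qM)) fun x => hC ⟨x, rfl⟩, φ',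
    fun _ => rfl, fun _ => rfl, hφ'y, fun x => ?_⟩
  rw [hθ]
  exact Prod.ext (hφ'y _) (hφ'y _)

/-- `(C^♭, C|_{C^♭})` and `(C^♯, C|_{C^♯})` are pure submodules of `(V,C)` as
Kronecker modules: for `U = C^♭` or `U = C^♯` (a subspace `S` with underlying set
`C^♭` or `C^♯`), every morphism from a finite-dimensional Kronecker module
`(X, Y, pM, qM)` to the quotient `(V/U, C/C|_U)` (realized via the image `D` of `C`
in `(V/U)²`, whose relation module is the quotient Kronecker module) lifts to a
morphism to `(V, C)`. -/
theorem flat_and_sharp_are_pure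
    {V : Type*} [AddCommGroup V] [Module K V] (C : Submodule K (V × V))
    (S : Submodule K V) (hS : (S : Set V) = cflat C ∨ (S : Set V) = csharp C)
    {X Y : Type*} [AddCommGroup X] [Module K X] [AddCommGroup Y] [Module K Y]
    [FiniteDimensional K X] [FiniteDimensional K Y]
    (pM qM : X →ₗ[K] Y)
    (θ : X →ₗ[K] ↥(C.map (S.mkQ.prodMap S.mkQ))) (φ : Y →ₗ[K] V ⧸ S)
    (h1 : ∀ x, ((θ x : (V ⧸ S) × (V ⧸ S))).1 = φ (pM x))
    (h2 : ∀ x, ((θ x : (V ⧸ S) × (V ⧸ S))).2 = φ (qM x)) :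
    ∃ (θ' : X →ₗ[K] ↥C) (φ' : Y →ₗ[K] V),
      (∀ x, ((θ' x : V × V)).1 = φ' (pM x)) ∧
      (∀ x, ((θ' x : V × V)).2 = φ' (qM x)) ∧
      (∀ y, S.mkQ (φ' y) = φ y) ∧
      (∀ x, (S.mkQ.prodMap S.mkQ) (θ' x : V × V) = (θ x : (V ⧸ S) × (V ⧸ S))) :=
  flat_and_sharp_are_pure_general C S hS pM qM θ φ h1 h2
end
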